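/- arXiv:0709.3039 — 5 statements merged into one kernel-verified Lean document; each statement's English description precedes it below -/
import Mathlib

section
/- Coupling theorem: Let G = (V,E) be a finite graph and p ∈ [0,1/2]. Sample ω from the random-cluster measure φ_{2p,2} on G (with edge parameter 2p and cluster weight q = 2), and then, conditionally on ω, sample a uniformly random even subgraph (V,γ) of the open graph (V, η(ω)). Then γ has the distribution ρ_p of the random even subgraph of G with parameter p, i.e., P(γ = g) ∝ p^{|g|}(1-p)^{|E\g|} for even g ⊆ E. -/
open Finset
open scoped Classical
set_option linter.unusedVariables false
set_option linter.unusedSectionVars false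

/-- An edge set is even if every vertex is incident to an even number of its edges. -/
def EvenSet {V : Type} [Fintype V] [DecidableEq V] (F : Finset (Sym2 V)) : Prop :=
  ∀ v : V, Even (F.filter (fun e => v ∈ e)).card

/-- The number of connected components `k(ω)` of the open graph `(V, ω)`. -/
noncomputable def numComp {V : Type} (ω : Finset (Sym2 V)) : ℕ :=
  Nat.card (SimpleGraph.fromEdgeSet (↑ω : Set (Sym2 V))).ConnectedComponent

/-- The number of even subgraphs of the open graph `(V, ω)`. -/
noncomputable def numEvenIn {V : Type} [Fintype V] [DecidableEq V] (ω : Finset (Sym2 V)) : ℕ :=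
  (ω.powerset.filter (fun F => EvenSet F)).card

namespace RC
variable {V : Type} [Fintype V] [DecidableEq V]

noncomputable def chi (e : Sym2 V) : V → ZMod 2 := fun v => if v ∈ e then 1 else 0

noncomputable def phi (ω : Finset (Sym2 V)) : ((↥ω) → ZMod 2) →ₗ[ZMod 2] (V → ZMod 2) :=
  ∑ e : ↥ω, (LinearMap.proj e).smulRight (chi (e : Sym2 V))

lemma phi_apply (ω : Finset (Sym2 V)) (x : ↥ω → ZMod 2) :
    phi ω x = ∑ e : ↥ω, x e • chi (e : Sym2 V) := by
  simp [phi, LinearMap.sum_apply]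

lemma phi_single (ω : Finset (Sym2 V)) (e : ↥ω) :
    phi ω (Pi.single e 1) = chi (e : Sym2 V) := by
  rw [phi_apply, Finset.sum_eq_single e] <;> simp +contextual [Pi.single_apply]

noncomputable def psi (ω : Finset (Sym2 V)) :
    (V → ZMod 2) →ₗ[ZMod 2]
      ((SimpleGraph.fromEdgeSet (↑ω : Set (Sym2 V))).ConnectedComponent → ZMod 2) :=
  LinearMap.pi (fun c => ∑ v ∈ univ.filter
    (fun v => (SimpleGraph.fromEdgeSet (↑ω : Set (Sym2 V))).connectedComponentMk v = c),
    LinearMap.proj v)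

lemma psi_apply (ω : Finset (Sym2 V)) (f : V → ZMod 2) (c) :
    psi ω f c = ∑ v ∈ univ.filter
      (fun v => (SimpleGraph.fromEdgeSet (↑ω : Set (Sym2 V))).connectedComponentMk v = c), f v := by
  simp [psi, LinearMap.pi_apply, LinearMap.sum_apply]

lemma psi_single (ω : Finset (Sym2 V)) (u : V) (c) :
    psi ω (Pi.single u 1) c = if (SimpleGraph.fromEdgeSet (↑ω : Set (Sym2 V))).connectedComponentMk u = c then 1 else 0 := by
  rw [psi_apply]
  simp only [Pi.single_apply]
  rw [Finset.sum_ite_eq' _ u (fun _ => (1 : ZMod 2))]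
  simp

lemma chi_eq (u v : V) (h : u ≠ v) :
    chi (s(u,v)) = Pi.single u (1 : ZMod 2) + Pi.single v 1 := by
  funext w
  simp only [chi, Sym2.mem_iff, Pi.add_apply, Pi.single_apply]
  rcases eq_or_ne w u with rfl | hu <;> rcases eq_or_ne w v with rfl | hv <;>
    simp_all [eq_comm]


noncomputable def sgl (u : V) : V → ZMod 2 := Pi.single u 1

lemma addself (x : V → ZMod 2) : x + x = 0 := funext fun v => CharTwo.add_self_eq_zero _

lemma psi_chi (ω : Finset (Sym2 V)) (e : Sym2 V) (he : e ∈ ω) (hd : ¬ e.IsDiag) :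
    psi ω (chi e) = 0 := by
  induction e with
  | _ u v =>
    rw [Sym2.mk_isDiag_iff] at hd
    have hadj : (SimpleGraph.fromEdgeSet (↑ω : Set (Sym2 V))).Adj u v := by
      rw [SimpleGraph.fromEdgeSet_adj]; exact ⟨he, hd⟩
    have hcomp : (SimpleGraph.fromEdgeSet (↑ω : Set (Sym2 V))).connectedComponentMk u =
        (SimpleGraph.fromEdgeSet (↑ω : Set (Sym2 V))).connectedComponentMk v :=
      SimpleGraph.ConnectedComponent.sound hadj.reachable
    funext c
    rw [chi_eq u v hd, map_add]
    simp only [Pi.add_apply, psi_single, hcomp, Pi.zero_apply]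
    split
    · decide
    · simp

section
variable (ω : Finset (Sym2 V))


lemma comp_surj : Function.Surjective ((SimpleGraph.fromEdgeSet (↑ω : Set (Sym2 V))).connectedComponentMk) :=
  fun c => c.exists_rep

noncomputable instance : Fintype ((SimpleGraph.fromEdgeSet (↑ω : Set (Sym2 V))).ConnectedComponent) :=
  Fintype.ofSurjective _ (comp_surj ω)

lemma single_add_single_mem_range {u v : V} (h : (SimpleGraph.fromEdgeSet (↑ω : Set (Sym2 V))).Reachable u v) :
    sgl u + sgl v ∈ LinearMap.range (phi ω) := by
  obtain ⟨w⟩ := h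
  induction w with
  | nil =>
    rw [addself]; exact zero_mem _
  | @cons a b c hadj p ih =>
    rw [SimpleGraph.fromEdgeSet_adj] at hadj
    have h1 : sgl a + sgl b ∈ LinearMap.range (phi ω) := by
      refine ⟨Pi.single (⟨s(a,b), hadj.1⟩ : ↥ω) 1, ?_⟩
      rw [phi_single, chi_eq a b hadj.2]; rfl
    have := add_mem h1 ih
    have heq : (sgl a + sgl b) + (sgl b + sgl c) = sgl a + sgl c := by
      rw [add_assoc, ← add_assoc (sgl b), addself, zero_add]
    rwa [heq] at this

lemma mem_range_iff (hd : ∀ e ∈ ω, ¬ e.IsDiag) (f : V → ZMod 2) :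
    f ∈ LinearMap.range (phi ω) ↔ psi ω f = 0 := by
  constructor
  · rintro ⟨x, rfl⟩
    rw [phi_apply, map_sum]
    refine Finset.sum_eq_zero fun e _ => ?_
    rw [map_smul, psi_chi ω e e.2 (hd _ e.2), smul_zero]
  · intro hf
    set rep : (SimpleGraph.fromEdgeSet (↑ω : Set (Sym2 V))).ConnectedComponent → V := Quot.out with hrep
    have hrepc : ∀ c, (SimpleGraph.fromEdgeSet (↑ω : Set (Sym2 V))).connectedComponentMk (rep c) = c := fun c => Quot.out_eq c
    have key : ∀ v : V, f v • (sgl v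
        + sgl (rep ((SimpleGraph.fromEdgeSet (↑ω : Set (Sym2 V))).connectedComponentMk v))) ∈ LinearMap.range (phi ω) := by
      intro v
      refine Submodule.smul_mem _ _ (single_add_single_mem_range ω ?_)
      exact (SimpleGraph.ConnectedComponent.exact (hrepc _)).symm
    have h2 : ∑ v : V, f v • sgl (rep ((SimpleGraph.fromEdgeSet (↑ω : Set (Sym2 V))).connectedComponentMk v)) = 0 := by
      rw [← Finset.sum_fiberwise univ (fun v => (SimpleGraph.fromEdgeSet (↑ω : Set (Sym2 V))).connectedComponentMk v)
        (fun v => f v • sgl (rep ((SimpleGraph.fromEdgeSet (↑ω : Set (Sym2 V))).connectedComponentMk v)))]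
      refine Finset.sum_eq_zero fun c _ => ?_
      have : ∀ v ∈ univ.filter (fun v => (SimpleGraph.fromEdgeSet (↑ω : Set (Sym2 V))).connectedComponentMk v = c),
          f v • sgl (rep ((SimpleGraph.fromEdgeSet (↑ω : Set (Sym2 V))).connectedComponentMk v))
            = f v • sgl (rep c) := by
        intro v hv
        rw [(Finset.mem_filter.mp hv).2]
      rw [Finset.sum_congr rfl this, ← Finset.sum_smul]
      have : ∑ v ∈ univ.filter (fun v => (SimpleGraph.fromEdgeSet (↑ω : Set (Sym2 V))).connectedComponentMk v = c), f v = psi ω f c := by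
        rw [psi_apply]
      rw [this, hf]
      simp
    have hsum : f = (∑ v : V, f v • (sgl v
        + sgl (rep ((SimpleGraph.fromEdgeSet (↑ω : Set (Sym2 V))).connectedComponentMk v))))
        + ∑ v : V, f v • sgl (rep ((SimpleGraph.fromEdgeSet (↑ω : Set (Sym2 V))).connectedComponentMk v)) := by
      rw [← Finset.sum_add_distrib]
      have : ∀ v : V, f v • (sgl v
          + sgl (rep ((SimpleGraph.fromEdgeSet (↑ω : Set (Sym2 V))).connectedComponentMk v)))
          + f v • sgl (rep ((SimpleGraph.fromEdgeSet (↑ω : Set (Sym2 V))).connectedComponentMk v))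
          = Pi.single v (f v) := by
        intro v
        rw [smul_add, add_assoc, ← smul_add, addself, smul_zero, add_zero]
        show f v • sgl v = Pi.single v (f v)
        rw [sgl, ← Pi.single_smul, smul_eq_mul, mul_one]
      rw [Finset.sum_congr rfl (fun v _ => this v), Finset.univ_sum_single]
    rw [hsum, h2, add_zero]
    exact Submodule.sum_mem _ (fun v _ => key v)

lemma psi_surj : Function.Surjective (psi ω) := by
  intro y
  set rep : (SimpleGraph.fromEdgeSet (↑ω : Set (Sym2 V))).ConnectedComponent → V := Quot.out with hrep
  have hrepc : ∀ c, (SimpleGraph.fromEdgeSet (↑ω : Set (Sym2 V))).connectedComponentMk (rep c) = c := fun c => Quot.out_eq c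
  refine ⟨∑ c, y c • sgl (rep c), ?_⟩
  rw [map_sum]
  funext c'
  simp only [Finset.sum_apply, map_smul, Pi.smul_apply, sgl, psi_single, hrepc, smul_eq_mul]
  rw [Finset.sum_eq_single c']
  · simp
  · intro b _ hb; simp [hb]
  · simp

lemma phi_xF (F : Finset (Sym2 V)) (hF : F ⊆ ω) (v : V) :
    phi ω (fun e => if (e : Sym2 V) ∈ F then 1 else 0) v
      = ((F.filter (fun e => v ∈ e)).card : ZMod 2) := by
  rw [phi_apply]
  simp only [Finset.sum_apply, Pi.smul_apply, smul_eq_mul, chi]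
  have step : ∀ e : ↥ω, (if (e : Sym2 V) ∈ F then (1:ZMod 2) else 0) *
      (if v ∈ (e : Sym2 V) then 1 else 0)
      = if (e : Sym2 V) ∈ F ∧ v ∈ (e : Sym2 V) then 1 else 0 := by
    intro e
    by_cases h1 : (e : Sym2 V) ∈ F <;> by_cases h2 : v ∈ (e : Sym2 V) <;> simp [h1, h2]
  rw [Finset.sum_congr rfl (fun e _ => step e), Finset.sum_boole]
  congr 1
  refine Finset.card_bij (fun e _ => (e : Sym2 V)) ?_ ?_ ?_
  · intro e he
    rw [Finset.mem_filter] at he ⊢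
    exact ⟨he.2.1, he.2.2⟩
  · intro a _ b _ h
    exact Subtype.ext h
  · intro b hb
    rw [Finset.mem_filter] at hb
    exact ⟨⟨b, hF hb.1⟩, Finset.mem_filter.mpr ⟨Finset.mem_univ _, hb.1, hb.2⟩, rfl⟩

lemma evenset_iff (F : Finset (Sym2 V)) (hF : F ⊆ ω) :
    EvenSet F ↔ phi ω (fun e => if (e : Sym2 V) ∈ F then 1 else 0) = 0 := by
  rw [EvenSet, funext_iff]
  refine forall_congr' fun v => ?_
  rw [phi_xF ω F hF v, Pi.zero_apply]
  rw [ZMod.natCast_eq_zero_iff]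
  exact even_iff_two_dvd

lemma zmod2_cases (a : ZMod 2) : a = 0 ∨ a = 1 := by revert a; decide

lemma mem_image_iff (x : ↥ω → ZMod 2) (e : ↥ω) :
    (e : Sym2 V) ∈ (ω.attach.filter (fun e' => x e' = 1)).image Subtype.val ↔ x e = 1 := by
  constructor
  · rintro h
    obtain ⟨a, ha, hae⟩ := Finset.mem_image.mp h
    obtain rfl : a = e := Subtype.ext hae
    exact (Finset.mem_filter.mp ha).2
  · intro h
    exact Finset.mem_image.mpr ⟨e, Finset.mem_filter.mpr ⟨Finset.mem_attach _ _, h⟩, rfl⟩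

lemma xF_image (x : ↥ω → ZMod 2) :
    (fun e : ↥ω => if (e : Sym2 V) ∈ (ω.attach.filter (fun e' => x e' = 1)).image Subtype.val
      then (1:ZMod 2) else 0) = x := by
  funext e
  rcases zmod2_cases (x e) with h | h
  · rw [if_neg, h]
    intro hmem
    rw [mem_image_iff ω x e] at hmem
    rw [hmem] at h
    exact one_ne_zero h
  · rw [if_pos ((mem_image_iff ω x e).mpr h), h]

noncomputable def kerEquiv :
    ↥(LinearMap.ker (phi ω)) ≃ {F : Finset (Sym2 V) // F ∈ ω.powerset.filter (fun F => EvenSet F)} where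
  toFun x := ⟨(ω.attach.filter (fun e' => x.1 e' = 1)).image Subtype.val, by
    rw [Finset.mem_filter, Finset.mem_powerset]
    constructor
    · intro b hb
      obtain ⟨a, _, rfl⟩ := Finset.mem_image.mp hb
      exact a.2
    · rw [evenset_iff ω _ (by intro b hb; obtain ⟨a, _, rfl⟩ := Finset.mem_image.mp hb; exact a.2)]
      rw [xF_image ω x.1]
      exact x.2⟩
  invFun F := ⟨fun e => if (e : Sym2 V) ∈ F.1 then 1 else 0, by
    have hm := Finset.mem_filter.mp F.2
    rw [LinearMap.mem_ker, ← evenset_iff ω F.1 (Finset.mem_powerset.mp hm.1)]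
    exact hm.2⟩
  left_inv x := Subtype.ext (xF_image ω x.1)
  right_inv F := by
    have hm := Finset.mem_filter.mp F.2
    have hsub := Finset.mem_powerset.mp hm.1
    refine Subtype.ext ?_
    ext b
    simp only [Finset.mem_image, Finset.mem_filter, Finset.mem_attach, true_and]
    constructor
    · rintro ⟨a, ha, rfl⟩
      by_contra h
      rw [if_neg h] at ha
      exact one_ne_zero ha.symm
    · intro hb
      exact ⟨⟨b, hsub hb⟩, by rw [if_pos hb], rfl⟩

lemma card_ker_eq : Nat.card (LinearMap.ker (phi ω)) = numEvenIn ω := by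
  rw [Nat.card_congr (kerEquiv ω), Nat.card_eq_finsetCard, numEvenIn]

lemma numEvenIn_mul (hd : ∀ e ∈ ω, ¬ e.IsDiag) :
    numEvenIn ω * 2 ^ (Fintype.card V) = 2 ^ (ω.card + numComp ω) := by
  have hzc : Nat.card (ZMod 2) = 2 := by rw [Nat.card_eq_fintype_card, ZMod.card]
  have hdom : Nat.card (↥ω → ZMod 2) = 2 ^ ω.card := by
    rw [Nat.card_fun, hzc, Nat.card_eq_fintype_card, Fintype.card_coe]
  have hV : Nat.card (V → ZMod 2) = 2 ^ Fintype.card V := by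
    rw [Nat.card_fun, hzc, Nat.card_eq_fintype_card]
  have hComp : Nat.card ((SimpleGraph.fromEdgeSet (↑ω : Set (Sym2 V))).ConnectedComponent
      → ZMod 2) = 2 ^ numComp ω := by
    rw [Nat.card_fun, hzc, numComp]
  have h1 : (2:ℕ) ^ ω.card
      = Nat.card (LinearMap.range (phi ω)) * Nat.card (LinearMap.ker (phi ω)) := by
    have hq : Nat.card ((↥ω → ZMod 2) ⧸ LinearMap.ker (phi ω))
        = Nat.card (LinearMap.range (phi ω)) :=
      Nat.card_congr (phi ω).quotKerEquivRange.toEquiv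
    rw [← hdom, Submodule.card_eq_card_quotient_mul_card (LinearMap.ker (phi ω)), hq]
    ring
  have h2 : (2:ℕ) ^ Fintype.card V
      = 2 ^ numComp ω * Nat.card (LinearMap.ker (psi ω)) := by
    have hq : Nat.card ((V → ZMod 2) ⧸ LinearMap.ker (psi ω)) = 2 ^ numComp ω :=
      (Nat.card_congr ((psi ω).quotKerEquivOfSurjective (psi_surj ω)).toEquiv).trans hComp
    rw [← hV, Submodule.card_eq_card_quotient_mul_card (LinearMap.ker (psi ω)), hq]
    ring
  have h3 : LinearMap.range (phi ω) = LinearMap.ker (psi ω) := by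
    ext f
    rw [LinearMap.mem_ker]
    exact mem_range_iff ω hd f
  rw [← card_ker_eq ω, h2, pow_add, h1, h3]
  ring

end

lemma sum_pow_card {α : Type*} [DecidableEq α] (C : Finset α) (x y : ℝ) :
    ∑ S ∈ C.powerset, x ^ S.card * y ^ (C.card - S.card) = (x + y) ^ C.card := by
  rw [← Finset.prod_const, Finset.prod_add]
  refine Finset.sum_congr rfl fun t ht => ?_
  rw [Finset.prod_const, Finset.prod_const,
    Finset.card_sdiff_of_subset (Finset.mem_powerset.mp ht)]

lemma sum_supersets {α : Type*} [DecidableEq α] (A B : Finset α) (hAB : A ⊆ B) (x y : ℝ) :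
    ∑ ω ∈ B.powerset.filter (fun ω => A ⊆ ω), x ^ ω.card * y ^ (B.card - ω.card)
      = x ^ A.card * (x + y) ^ (B.card - A.card) := by
  rw [← Finset.card_sdiff_of_subset hAB, ← sum_pow_card (B \ A) x y, Finset.mul_sum]
  refine Finset.sum_nbij' (fun ω => ω \ A) (fun S => A ∪ S) ?_ ?_ ?_ ?_ ?_
  · intro ω hω
    rw [Finset.mem_filter, Finset.mem_powerset] at hω
    exact Finset.mem_powerset.mpr (Finset.sdiff_subset_sdiff hω.1 le_rfl)
  · intro S hS
    rw [Finset.mem_powerset] at hS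
    rw [Finset.mem_filter, Finset.mem_powerset]
    exact ⟨Finset.union_subset hAB (hS.trans Finset.sdiff_subset), Finset.subset_union_left⟩
  · intro ω hω
    rw [Finset.mem_filter] at hω
    exact Finset.union_sdiff_of_subset hω.2
  · intro S hS
    rw [Finset.mem_powerset] at hS
    show (A ∪ S) \ A = S
    rw [Finset.union_sdiff_cancel_left]
    exact Finset.disjoint_of_subset_right hS Finset.disjoint_sdiff
  · intro ω hω
    rw [Finset.mem_filter, Finset.mem_powerset] at hω
    have h2 : A.card ≤ ω.card := Finset.card_le_card hω.2
    have h3 : ω.card ≤ B.card := Finset.card_le_card hω.1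
    have hc : (ω \ A).card = ω.card - A.card := Finset.card_sdiff_of_subset hω.2
    rw [hc, Finset.card_sdiff_of_subset hAB]
    have he : (B.card - A.card) - (ω.card - A.card) = B.card - ω.card := by omega
    rw [he, ← mul_assoc, ← pow_add]
    congr 2
    omega

lemma evenSet_empty {V : Type} [Fintype V] [DecidableEq V] : EvenSet (∅ : Finset (Sym2 V)) :=
  fun _ => by simp

lemma numEvenIn_pos {V : Type} [Fintype V] [DecidableEq V] (ω : Finset (Sym2 V)) :
    0 < numEvenIn ω :=
  Finset.card_pos.mpr ⟨∅, Finset.mem_filter.mpr ⟨Finset.empty_mem_powerset ω, evenSet_empty⟩⟩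

end RC

/-- Coupling theorem: sample `ω` from the random-cluster measure `φ_{2p,2}` on `G`, then a
uniformly random even subgraph `γ` of the open graph `(V, η(ω))`.  For `p ∈ [0,1/2]`, the
resulting `γ` is the random even subgraph of `G` with parameter `p`: for every even
`g ⊆ E`, `P(γ = g) = p^{|g|}(1-p)^{|E∖g|} / Z^E`. -/
theorem random_cluster_even_coupling {V : Type} [Fintype V] [DecidableEq V]
    (G : SimpleGraph V) [DecidableRel G.Adj] (p : ℝ) (hp0 : 0 ≤ p) (hp : p ≤ 1 / 2)
    (g : Finset (Sym2 V)) (hg : g ⊆ G.edgeFinset) (hge : EvenSet g) :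
    (∑ ω ∈ G.edgeFinset.powerset,
        ((2 * p) ^ ω.card * (1 - 2 * p) ^ (G.edgeFinset.card - ω.card) * 2 ^ numComp ω) *
          (if g ⊆ ω then ((numEvenIn ω : ℝ))⁻¹ else 0)) /
      (∑ ω ∈ G.edgeFinset.powerset,
        ((2 * p) ^ ω.card * (1 - 2 * p) ^ (G.edgeFinset.card - ω.card) *
          2 ^ numComp ω : ℝ)) =
    (p ^ g.card * (1 - p) ^ (G.edgeFinset.card - g.card)) /
      (∑ g' ∈ G.edgeFinset.powerset.filter (fun F => EvenSet F),
        (p ^ g'.card * (1 - p) ^ (G.edgeFinset.card - g'.card) : ℝ)) := by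
  set E := G.edgeFinset with hE
  set m := E.card with hm
  have hd : ∀ ω ∈ E.powerset, ∀ e ∈ ω, ¬ e.IsDiag := by
    intro ω hω e he
    have : e ∈ G.edgeSet := SimpleGraph.mem_edgeFinset.mp (Finset.mem_powerset.mp hω he)
    exact G.not_isDiag_of_mem_edgeSet this
  have hkey : ∀ ω ∈ E.powerset,
      (numEvenIn ω : ℝ) * 2 ^ (Fintype.card V) = 2 ^ ω.card * 2 ^ numComp ω := by
    intro ω hω
    have h := RC.numEvenIn_mul ω (hd ω hω)
    have h2 := congrArg (Nat.cast : ℕ → ℝ) h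
    push_cast at h2
    rw [pow_add] at h2
    exact h2
  have hne : ∀ ω : Finset (Sym2 V), ((numEvenIn ω : ℝ)) ≠ 0 :=
    fun ω => Nat.cast_ne_zero.mpr (RC.numEvenIn_pos ω).ne'
  have hnum : (∑ ω ∈ E.powerset,
      ((2 * p) ^ ω.card * (1 - 2 * p) ^ (m - ω.card) * 2 ^ numComp ω) *
        (if g ⊆ ω then ((numEvenIn ω : ℝ))⁻¹ else 0))
      = 2 ^ (Fintype.card V) * (p ^ g.card * (1 - p) ^ (m - g.card)) := by
    have hterm : ∀ ω ∈ E.powerset,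
        ((2 * p) ^ ω.card * (1 - 2 * p) ^ (m - ω.card) * 2 ^ numComp ω) *
          (if g ⊆ ω then ((numEvenIn ω : ℝ))⁻¹ else 0)
        = if g ⊆ ω then
            (2:ℝ) ^ (Fintype.card V) * (p ^ ω.card * (1 - 2 * p) ^ (m - ω.card)) else 0 := by
      intro ω hω
      by_cases hgω : g ⊆ ω
      · rw [if_pos hgω, if_pos hgω]
        have h := hkey ω hω
        rw [mul_comm _ ((numEvenIn ω : ℝ))⁻¹, ← div_eq_inv_mul, div_eq_iff (hne ω)]
        linear_combination (-(p ^ ω.card * (1 - 2*p) ^ (m - ω.card))) * h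
      · rw [if_neg hgω, if_neg hgω, mul_zero]
    rw [Finset.sum_congr rfl hterm, ← Finset.sum_filter, ← Finset.mul_sum]
    have := RC.sum_supersets g E hg p (1 - 2*p)
    have h1 : p + (1 - 2*p) = 1 - p := by ring
    rw [h1] at this
    rw [this]
  have hden : (∑ ω ∈ E.powerset,
      ((2 * p) ^ ω.card * (1 - 2 * p) ^ (m - ω.card) * 2 ^ numComp ω : ℝ))
      = 2 ^ (Fintype.card V) * (∑ g' ∈ E.powerset.filter (fun F => EvenSet F),
          (p ^ g'.card * (1 - p) ^ (m - g'.card) : ℝ)) := by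
    have hterm : ∀ ω ∈ E.powerset,
        ((2 * p) ^ ω.card * (1 - 2 * p) ^ (m - ω.card) * 2 ^ numComp ω : ℝ)
        = ∑ _F ∈ ω.powerset.filter (fun F => EvenSet F),
            (2:ℝ) ^ (Fintype.card V) * (p ^ ω.card * (1 - 2 * p) ^ (m - ω.card)) := by
      intro ω hω
      rw [Finset.sum_const, nsmul_eq_mul]
      have hcc : (((ω.powerset.filter (fun F => EvenSet F)).card : ℕ) : ℝ)
          = (numEvenIn ω : ℝ) := by rw [numEvenIn]
      rw [hcc]
      linear_combination (-(p ^ ω.card * (1 - 2*p) ^ (m - ω.card))) * hkey ω hω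
    rw [Finset.sum_congr rfl hterm]
    rw [Finset.sum_comm' (t' := E.powerset.filter (fun F => EvenSet F))
      (s' := fun F => E.powerset.filter (fun ω => F ⊆ ω)) ?_]
    · rw [Finset.mul_sum]
      refine Finset.sum_congr rfl fun F hF => ?_
      rw [Finset.mem_filter, Finset.mem_powerset] at hF
      have := RC.sum_supersets F E hF.1 p (1 - 2*p)
      have h1 : p + (1 - 2*p) = 1 - p := by ring
      rw [h1] at this
      rw [← Finset.mul_sum, this]
    · intro ω F
      simp only [Finset.mem_filter, Finset.mem_powerset]
      constructor
      · rintro ⟨h1, h2, h3⟩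
        exact ⟨⟨h1, h2⟩, h2.trans h1, h3⟩
      · rintro ⟨⟨h1, h2⟩, h3, h4⟩
        exact ⟨h1, h2, h4⟩
  rw [hnum, hden]
  exact mul_div_mul_left _ _ (by positivity : (2:ℝ) ^ (Fintype.card V) ≠ 0)
end

section
/- Key combinatorial identity for the coupling: for any even g ⊆ E and p ∈ [0,1/2], Σ_{ω : g ⊆ η(ω)} 2^{-c(ω)} (2p)^{|η(ω)|}(1-2p)^{|E\η(ω)|} 2^{k(ω)} = 2^{|V|} p^{|g|} (1-p)^{|E\g|}, where c(ω) = |η(ω)| - |V| + k(ω). -/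
open Finset
open scoped Classical

/-- Key identity for the coupling: for every even `g ⊆ E` and `p ∈ [0,1/2]`,
`∑_{ω : g ⊆ η(ω)} 2^{-c(ω)} (2p)^{|η(ω)|}(1-2p)^{|E∖η(ω)|} 2^{k(ω)}
  = 2^{|V|} p^{|g|}(1-p)^{|E∖g|}`, where `c(ω) = |η(ω)| - |V| + k(ω)`. -/
theorem coupling_key_identity {V : Type} [Fintype V] [DecidableEq V]
    (G : SimpleGraph V) [DecidableRel G.Adj] (p : ℝ) (hp0 : 0 ≤ p) (hp : p ≤ 1 / 2)
    (g : Finset (Sym2 V)) (hg : g ⊆ G.edgeFinset) (hge : EvenSet g) :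
    (∑ ω ∈ G.edgeFinset.powerset.filter (fun ω => g ⊆ ω),
        (2 : ℝ) ^ (-((ω.card : ℤ) - Fintype.card V + numComp ω)) *
          ((2 * p) ^ ω.card * (1 - 2 * p) ^ (G.edgeFinset.card - ω.card) *
            2 ^ numComp ω)) =
      2 ^ Fintype.card V * p ^ g.card * (1 - p) ^ (G.edgeFinset.card - g.card) := by
  set E := G.edgeFinset with hE
  set m := E.card with hm
  -- step 1: simplify the summand, the `numComp` contributions cancel
  have key : ∀ ω ∈ E.powerset.filter (fun ω => g ⊆ ω),
      (2 : ℝ) ^ (-((ω.card : ℤ) - Fintype.card V + numComp ω)) *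
          ((2 * p) ^ ω.card * (1 - 2 * p) ^ (m - ω.card) * 2 ^ numComp ω) =
      (2 : ℝ) ^ Fintype.card V * (p ^ ω.card * (1 - 2 * p) ^ (m - ω.card)) := by
    intro ω _
    have h2 : (2 : ℝ) ≠ 0 := by norm_num
    have hpow : (2 : ℝ) ^ (-((ω.card : ℤ) - Fintype.card V + numComp ω)) *
        ((2 : ℝ) ^ ω.card * (2 : ℝ) ^ numComp ω) = (2 : ℝ) ^ Fintype.card V := by
      rw [← zpow_natCast (2 : ℝ) ω.card, ← zpow_natCast (2 : ℝ) (numComp ω),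
        ← zpow_natCast (2 : ℝ) (Fintype.card V), ← zpow_add₀ h2, ← zpow_add₀ h2]
      congr 1
      ring
    calc (2 : ℝ) ^ (-((ω.card : ℤ) - Fintype.card V + numComp ω)) *
          ((2 * p) ^ ω.card * (1 - 2 * p) ^ (m - ω.card) * 2 ^ numComp ω)
        = ((2 : ℝ) ^ (-((ω.card : ℤ) - Fintype.card V + numComp ω)) *
            ((2 : ℝ) ^ ω.card * (2 : ℝ) ^ numComp ω)) *
            (p ^ ω.card * (1 - 2 * p) ^ (m - ω.card)) := by
          rw [mul_pow]; ring
      _ = _ := by rw [hpow]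
  rw [Finset.sum_congr rfl key, ← Finset.mul_sum]
  -- step 2: reindex the sum by t = ω \ g over subsets of E \ g
  have hreindex :
      (∑ ω ∈ E.powerset.filter (fun ω => g ⊆ ω), p ^ ω.card * (1 - 2 * p) ^ (m - ω.card)) =
      ∑ t ∈ (E \ g).powerset, p ^ g.card * (p ^ t.card * (1 - 2 * p) ^ ((E \ g).card - t.card)) := by
    refine Finset.sum_nbij' (fun ω => ω \ g) (fun t => g ∪ t) ?_ ?_ ?_ ?_ ?_
    · intro ω hω
      simp only [Finset.mem_filter, Finset.mem_powerset] at hω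
      simp only [Finset.mem_powerset]
      exact Finset.sdiff_subset_sdiff hω.1 le_rfl
    · intro t ht
      simp only [Finset.mem_powerset] at ht
      simp only [Finset.mem_filter, Finset.mem_powerset]
      exact ⟨Finset.union_subset hg (ht.trans Finset.sdiff_subset), Finset.subset_union_left⟩
    · intro ω hω
      simp only [Finset.mem_filter, Finset.mem_powerset] at hω
      exact Finset.union_sdiff_of_subset hω.2
    · intro t ht
      simp only [Finset.mem_powerset] at ht
      have : Disjoint g t := Finset.disjoint_of_subset_right ht Finset.disjoint_sdiff
      show (g ∪ t) \ g = t
      rw [Finset.union_sdiff_cancel_left this]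
    · intro ω hω
      simp only [Finset.mem_filter, Finset.mem_powerset] at hω
      have hgc : g.card ≤ ω.card := Finset.card_le_card hω.2
      have hωE : ω.card ≤ m := Finset.card_le_card hω.1
      have hcard : (ω \ g).card = ω.card - g.card := Finset.card_sdiff_of_subset hω.2
      have hEg : (E \ g).card = m - g.card := Finset.card_sdiff_of_subset hg
      rw [hcard, hEg, show m - #g - (#ω - #g) = m - #ω from by omega,
        ← mul_assoc, ← pow_add, show #g + (#ω - #g) = #ω from by omega]
  rw [hreindex, ← Finset.mul_sum]
  -- step 3: binomial theorem on E \ g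
  have hbin : (∑ t ∈ (E \ g).powerset, p ^ t.card * (1 - 2 * p) ^ ((E \ g).card - t.card)) =
      (1 - p) ^ ((E \ g).card) := by
    have := Finset.prod_add (fun _ : Sym2 V => p) (fun _ => 1 - 2 * p) (E \ g)
    simp only [Finset.prod_const] at this
    have hval : p + (1 - 2 * p) = 1 - p := by ring
    rw [hval] at this
    rw [this]
    refine Finset.sum_congr rfl fun t ht => ?_
    simp only [Finset.mem_powerset] at ht
    rw [Finset.card_sdiff_of_subset ht]
  rw [hbin, Finset.card_sdiff_of_subset hg]
  ring
end

section
/- Converse coupling: Let (V,F) be a random even subgraph of a finite graph G = (V,E) with parameter p ≤ 1/2. Independently colour each edge e ∉ F blue with probability p/(1-p). Let H be the union of F with the set of blue edges. Then H has the random-cluster distribution φ_{2p,2}, i.e., P(H = h) ∝ (2p)^{|h|}(1-2p)^{|E\h|} 2^{k(h)} for h ⊆ E. -/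
open Finset
open scoped Classical

set_option linter.unusedSectionVars false
set_option linter.unnecessarySimpa false
set_option maxHeartbeats 1000000

namespace CCAux
open Module
variable {V : Type} [Fintype V] [DecidableEq V]
noncomputable section
variable (h : Finset (Sym2 V))
abbrev gr : SimpleGraph V := SimpleGraph.fromEdgeSet (↑h : Set (Sym2 V))
noncomputable instance : Fintype (gr h).ConnectedComponent := Fintype.ofFinite _
def dd : (↥h → ZMod 2) →ₗ[ZMod 2] (V → ZMod 2) :=
  Matrix.mulVecLin (Matrix.of fun v (e : ↥h) => if v ∈ (e : Sym2 V) then 1 else 0)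
lemma dd_apply (x : ↥h → ZMod 2) (v : V) :
    dd h x v = ∑ e : ↥h, if v ∈ (e : Sym2 V) then x e else 0 := by
  simp [dd, Matrix.mulVecLin_apply, Matrix.mulVec, dotProduct, boole_mul]

def ss : (V → ZMod 2) →ₗ[ZMod 2] ((gr h).ConnectedComponent → ZMod 2) :=
  Matrix.mulVecLin (Matrix.of fun c v => if (gr h).connectedComponentMk v = c then 1 else 0)

lemma ss_apply (y : V → ZMod 2) (c : (gr h).ConnectedComponent) :
    ss h y c = ∑ v : V, if (gr h).connectedComponentMk v = c then y v else 0 := by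
  simp [ss, Matrix.mulVecLin_apply, Matrix.mulVec, dotProduct, boole_mul]

variable {h}

lemma edge_mem_range {u w : V} (hadj : (gr h).Adj u w) :
    Pi.single u (1 : ZMod 2) + Pi.single w 1 ∈ LinearMap.range (dd h) := by
  rw [SimpleGraph.fromEdgeSet_adj] at hadj
  obtain ⟨he, hne⟩ := hadj
  refine ⟨fun e => if e = ⟨s(u, w), he⟩ then 1 else 0, ?_⟩
  funext t
  rw [dd_apply, Finset.sum_eq_single (⟨s(u, w), he⟩ : ↥h)]
  · simp only [if_pos rfl, Pi.add_apply, Pi.single_apply]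
    by_cases h1 : t = u <;> by_cases h2 : t = w
    · exact absurd (h1.symm.trans h2) hne
    · simp [Sym2.mem_iff, h1, h2, hne]
    · simp [Sym2.mem_iff, h1, h2, Ne.symm hne]
    · simp [Sym2.mem_iff, h1, h2]
  · intro e _ hne'
    simp [hne']
  · intro hnot; exact absurd (Finset.mem_univ _) hnot

lemma pair_mem_range {u w : V} (hr : (gr h).Reachable u w) :
    Pi.single u (1 : ZMod 2) + Pi.single w 1 ∈ LinearMap.range (dd h) := by
  obtain ⟨p⟩ := hr
  induction p with
  | @nil a =>
    have : (Pi.single a (1 : ZMod 2) + Pi.single a 1 : V → ZMod 2) = 0 :=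
      by funext t; rw [Pi.add_apply, Pi.zero_apply]; exact CharTwo.add_self_eq_zero _
    rw [this]
    exact zero_mem _
  | @cons a b c hadj q ih =>
    have h1 := edge_mem_range hadj
    have hb : (Pi.single b (1 : ZMod 2) + Pi.single b 1 : V → ZMod 2) = 0 :=
      by funext t; rw [Pi.add_apply, Pi.zero_apply]; exact CharTwo.add_self_eq_zero _
    have key : (Pi.single a (1 : ZMod 2) + Pi.single c 1 : V → ZMod 2) =
        (Pi.single a (1 : ZMod 2) + Pi.single b 1 : V → ZMod 2) +
          (Pi.single b (1 : ZMod 2) + Pi.single c 1 : V → ZMod 2) := by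
      linear_combination -hb
    rw [key]
    exact add_mem h1 ih

lemma ss_dd (hnd : ∀ e ∈ h, ¬ e.IsDiag) (x : ↥h → ZMod 2) : ss h (dd h x) = 0 := by
  funext c
  rw [ss_apply, Pi.zero_apply]
  have key : ∀ v : V, (if (gr h).connectedComponentMk v = c then dd h x v else 0)
      = ∑ e : ↥h, if (gr h).connectedComponentMk v = c ∧ v ∈ (e : Sym2 V) then x e else 0 := by
    intro v
    rw [dd_apply]
    split
    · next hc => exact Finset.sum_congr rfl fun e _ => by simp [hc]
    · next hc => simp [hc]
  simp_rw [key]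
  rw [Finset.sum_comm]
  refine Finset.sum_eq_zero fun e _ => ?_
  obtain ⟨e, he⟩ := e
  induction e using Sym2.ind with
  | _ u w =>
    have hne : u ≠ w := by
      intro hq; exact hnd _ he (by simpa [hq] using Sym2.mk_isDiag_iff.mpr rfl)
    have hadj : (gr h).Adj u w := (SimpleGraph.fromEdgeSet_adj _).mpr ⟨he, hne⟩
    have hcc : (gr h).connectedComponentMk u = (gr h).connectedComponentMk w :=
      SimpleGraph.ConnectedComponent.sound hadj.reachable
    rw [← Finset.sum_filter]
    have hfil : (Finset.univ.filter fun v =>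
        (gr h).connectedComponentMk v = c ∧ v ∈ (s(u, w) : Sym2 V)) =
        if (gr h).connectedComponentMk u = c then {u, w} else ∅ := by
      split
      · next hC =>
        ext v
        simp only [Finset.mem_filter, Finset.mem_univ, true_and, Sym2.mem_iff,
          Finset.mem_insert, Finset.mem_singleton]
        constructor
        · rintro ⟨-, hv⟩; exact hv
        · rintro (rfl | rfl)
          · exact ⟨hC, Or.inl rfl⟩
          · exact ⟨hcc ▸ hC, Or.inr rfl⟩
      · next hC =>
        ext v
        simp only [Finset.mem_filter, Finset.mem_univ, true_and, Sym2.mem_iff,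
          Finset.notMem_empty, iff_false, not_and]
        rintro hv (rfl | rfl)
        · exact hC hv
        · exact hC (hcc.trans hv)
    rw [hfil]
    split
    · rw [Finset.sum_insert (by simpa using hne), Finset.sum_singleton,
        CharTwo.add_self_eq_zero]
    · exact Finset.sum_empty

lemma ss_surj : Function.Surjective (ss h) := by
  intro z
  have hex : ∀ c : (gr h).ConnectedComponent, ∃ v, (gr h).connectedComponentMk v = c := by
    intro c
    induction c using SimpleGraph.ConnectedComponent.ind with
    | _ v => exact ⟨v, rfl⟩
  choose rep hrep using hex
  refine ⟨fun v => if v = rep ((gr h).connectedComponentMk v)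
      then z ((gr h).connectedComponentMk v) else 0, ?_⟩
  funext c
  rw [ss_apply]
  rw [Finset.sum_eq_single (rep c)]
  · rw [if_pos (hrep c), if_pos, hrep c]
    rw [hrep c]
  · intro v _ hv
    rcases eq_or_ne ((gr h).connectedComponentMk v) c with hc | hc
    · rw [if_pos hc, if_neg, ]
      rw [hc]
      exact fun hq => hv (by rw [hq])
    · rw [if_neg hc]
  · intro hnot; exact absurd (Finset.mem_univ _) hnot


lemma ss_dd_pt (hnd : ∀ e ∈ h, ¬ e.IsDiag) {y : V → ZMod 2}
    (hy : y ∈ LinearMap.range (dd h)) : ss h y = 0 := by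
  obtain ⟨x, rfl⟩ := hy
  exact ss_dd hnd x

lemma ker_le_range (hnd : ∀ e ∈ h, ¬ e.IsDiag) :
    ∀ (n : ℕ) (y : V → ZMod 2), (Finset.univ.filter fun v => y v ≠ 0).card ≤ n →
      ss h y = 0 → y ∈ LinearMap.range (dd h) := by
  intro n
  induction n with
  | zero =>
    intro y hcard hy
    have hy0 : y = 0 := by
      funext v
      show y v = 0
      by_contra hv
      have : v ∈ Finset.univ.filter fun v => y v ≠ 0 := by simp [hv]
      have := Finset.card_pos.mpr ⟨v, this⟩
      omega
    rw [hy0]; exact zero_mem _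
  | succ n ih =>
    intro y hcard hy
    by_cases h0 : y = 0
    · rw [h0]; exact zero_mem _
    obtain ⟨u, hu⟩ := Function.ne_iff.mp h0
    simp only [Pi.zero_apply] at hu
    have two_cases : ∀ a : ZMod 2, a ≠ 0 → a = 1 := by decide
    have hu1 : y u = 1 := two_cases _ hu
    set c := (gr h).connectedComponentMk u with hc
    have hsum : ∑ v ∈ Finset.univ.filter
        (fun v => (gr h).connectedComponentMk v = c), y v = 0 := by
      have := congrFun hy c
      rw [ss_apply, Pi.zero_apply] at this
      rw [Finset.sum_filter]
      exact this
    have hu_mem : u ∈ Finset.univ.filter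
        (fun v => (gr h).connectedComponentMk v = c) :=
      Finset.mem_filter.mpr ⟨Finset.mem_univ _, hc.symm⟩
    rw [← Finset.add_sum_erase _ _ hu_mem, hu1] at hsum
    have hrest : ∑ v ∈ (Finset.univ.filter
        (fun v => (gr h).connectedComponentMk v = c)).erase u, y v = 1 := by
      have := eq_neg_of_add_eq_zero_right hsum
      rw [this]; decide
    obtain ⟨v, hv_mem, hv⟩ := Finset.exists_ne_zero_of_sum_ne_zero
      (by rw [hrest]; exact one_ne_zero)
    have hv1 : y v = 1 := two_cases _ hv
    obtain ⟨hvne, hvc⟩ : v ≠ u ∧ (gr h).connectedComponentMk v = c := by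
      have := Finset.mem_erase.mp hv_mem
      exact ⟨this.1, (Finset.mem_filter.mp this.2).2⟩
    have hreach : (gr h).Reachable u v :=
      (SimpleGraph.ConnectedComponent.exact (hvc.trans hc)).symm
    have hpair := pair_mem_range (h := h) hreach
    set P : V → ZMod 2 := Pi.single u 1 + Pi.single v 1 with hP
    have hPu : P u = 1 := by simp [hP, Pi.single_apply, Ne.symm hvne]
    have hPv : P v = 1 := by simp [hP, Pi.single_apply, hvne]
    have hPo : ∀ t, t ≠ u → t ≠ v → P t = 0 := fun t h1 h2 => by
      simp [hP, Pi.single_apply, h1, h2]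
    set y' : V → ZMod 2 := y + P with hy'
    have hy'u : y' u = 0 := by rw [hy', Pi.add_apply, hu1, hPu]; decide
    have hy'v : y' v = 0 := by rw [hy', Pi.add_apply, hv1, hPv]; decide
    have hy'o : ∀ t, t ≠ u → t ≠ v → y' t = y t := fun t h1 h2 => by
      rw [hy', Pi.add_apply, hPo t h1 h2, add_zero]
    have hsy' : ss h y' = 0 := by
      rw [hy', map_add, hy, zero_add]; exact ss_dd_pt hnd hpair
    have hsub : (Finset.univ.filter fun t => y' t ≠ 0) ⊆
        (Finset.univ.filter fun t => y t ≠ 0).erase u := by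
      intro t ht
      rw [Finset.mem_filter] at ht
      have h1 : t ≠ u := fun hq => ht.2 (hq ▸ hy'u)
      have h2 : t ≠ v := fun hq => ht.2 (hq ▸ hy'v)
      exact Finset.mem_erase.mpr ⟨h1, by simp [← hy'o t h1 h2, ht.2]⟩
    have hu_mem' : u ∈ Finset.univ.filter (fun t => y t ≠ 0) := by simp [hu]
    have hcard' : (Finset.univ.filter fun t => y' t ≠ 0).card ≤ n := by
      have c1 := Finset.card_le_card hsub
      have c2 := Finset.card_erase_lt_of_mem hu_mem'
      omega
    have hy'range := ih y' hcard' hsy'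
    have hfin : y = y' + P := by
      rw [hy', add_assoc]
      have hPP : P + P = 0 := by
        funext t; rw [Pi.add_apply, Pi.zero_apply]; exact CharTwo.add_self_eq_zero _
      rw [hPP, add_zero]
    rw [hfin]
    exact add_mem hy'range hpair

lemma range_eq_ker (hnd : ∀ e ∈ h, ¬ e.IsDiag) :
    LinearMap.range (dd h) = LinearMap.ker (ss h) := by
  apply le_antisymm
  · rintro y hy
    exact LinearMap.mem_ker.mpr (ss_dd_pt hnd hy)
  · intro y hy
    exact ker_le_range hnd _ y le_rfl (LinearMap.mem_ker.mp hy)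


variable (h)

def xF (F : Finset (Sym2 V)) : ↥h → ZMod 2 := fun e => if (e : Sym2 V) ∈ F then 1 else 0

lemma dd_xF (F : Finset (Sym2 V)) (hF : F ⊆ h) (v : V) :
    dd h (xF h F) v = ((F.filter fun e => v ∈ e).card : ZMod 2) := by
  rw [dd_apply]
  have key : ∀ e : ↥h, (if v ∈ (e : Sym2 V) then xF h F e else 0) =
      if (e : Sym2 V) ∈ F.filter (fun e => v ∈ e) then 1 else 0 := by
    intro e
    simp only [xF, Finset.mem_filter]
    by_cases h1 : v ∈ (e : Sym2 V) <;> by_cases h2 : (e : Sym2 V) ∈ F <;> simp [h1, h2]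
  simp_rw [key]
  rw [Finset.sum_coe_sort h (fun e => if e ∈ F.filter (fun e => v ∈ e) then (1 : ZMod 2) else 0),
    Finset.sum_ite_mem, Finset.inter_eq_right.mpr ((Finset.filter_subset _ _).trans hF),
    Finset.sum_const, nsmul_eq_mul, mul_one]

lemma evenset_iff (F : Finset (Sym2 V)) (hF : F ⊆ h) : EvenSet F ↔ dd h (xF h F) = 0 := by
  constructor
  · intro hE
    funext v
    rw [dd_xF h F hF]
    show _ = (0 : ZMod 2)
    rw [ZMod.natCast_eq_zero_iff]
    obtain ⟨k, hk⟩ := hE v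
    exact ⟨k, by omega⟩
  · intro h0 v
    have := congrFun h0 v
    rw [dd_xF h F hF] at this
    rw [show ((0 : V → ZMod 2) v) = (0 : ZMod 2) from rfl] at this
    rw [ZMod.natCast_eq_zero_iff] at this
    obtain ⟨k, hk⟩ := this
    exact ⟨k, by omega⟩

noncomputable instance : Fintype ↥(LinearMap.ker (dd h)) := Fintype.ofFinite _

lemma xF_image (b : ↥h → ZMod 2) :
    xF h ((Finset.univ.filter fun e : ↥h => b e = 1).image Subtype.val) = b := by
  funext e
  have hmem : ((e : Sym2 V) ∈ (Finset.univ.filter fun e' : ↥h => b e' = 1).image Subtype.val)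
      ↔ b e = 1 := by
    simp only [Finset.mem_image, Finset.mem_filter, Finset.mem_univ, true_and]
    constructor
    · rintro ⟨e', h1, he'⟩
      rwa [Subtype.ext he'] at h1
    · intro hb; exact ⟨e, hb, rfl⟩
  simp only [xF, hmem]
  rcases (by decide : ∀ a : ZMod 2, a = 0 ∨ a = 1) (b e) with h0 | h1
  · rw [if_neg (by rw [h0]; decide), h0]
  · rw [if_pos h1, h1]

lemma card_even_eq :
    (h.powerset.filter fun F => EvenSet F).card = Fintype.card (LinearMap.ker (dd h)) := by
  rw [← Finset.card_univ]
  refine Finset.card_bij'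
    (fun F hF => (⟨xF h F, by
      rw [LinearMap.mem_ker]
      have hm := Finset.mem_filter.mp hF
      exact (evenset_iff h F (Finset.mem_powerset.mp hm.1)).mp hm.2⟩ :
        LinearMap.ker (dd h)))
    (fun b _ => (Finset.univ.filter fun e : ↥h => (b : ↥h → ZMod 2) e = 1).image Subtype.val)
    (fun F hF => Finset.mem_univ _) ?_ ?_ ?_
  · intro b _
    rw [Finset.mem_filter, Finset.mem_powerset]
    have hsub : (Finset.univ.filter fun e : ↥h => (b : ↥h → ZMod 2) e = 1).image Subtype.val ⊆ h := by
      intro x hx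
      simp only [Finset.mem_image, Finset.mem_filter] at hx
      obtain ⟨e', -, he'⟩ := hx
      exact he' ▸ e'.2
    refine ⟨hsub, (evenset_iff h _ hsub).mpr ?_⟩
    rw [xF_image h (b : ↥h → ZMod 2)]
    exact LinearMap.mem_ker.mp b.2
  · intro F hF
    have hFh : F ⊆ h := Finset.mem_powerset.mp (Finset.mem_filter.mp hF).1
    ext e
    simp only [Finset.mem_image, Finset.mem_filter, Finset.mem_univ, true_and]
    constructor
    · rintro ⟨e', h1, rfl⟩
      by_contra hc
      rw [xF, if_neg hc] at h1
      exact absurd h1 (by decide)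
    · intro he
      exact ⟨⟨e, hFh he⟩, by rw [xF, if_pos he], rfl⟩
  · intro b _
    exact Subtype.ext (xF_image h (b : ↥h → ZMod 2))

lemma finrank_ker (hnd : ∀ e ∈ h, ¬ e.IsDiag) :
    Module.finrank (ZMod 2) (LinearMap.ker (dd h)) + Fintype.card V = h.card + numComp h := by
  have r1 := LinearMap.finrank_range_add_finrank_ker (dd h)
  have r2 := LinearMap.finrank_range_add_finrank_ker (ss h)
  have e1 : Module.finrank (ZMod 2) (↥h → ZMod 2) = h.card := by
    rw [Module.finrank_pi, Fintype.card_coe]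
  have e2 : Module.finrank (ZMod 2) (V → ZMod 2) = Fintype.card V := Module.finrank_pi _
  have e3 : LinearMap.range (ss h) = ⊤ := LinearMap.range_eq_top.mpr ss_surj
  have e4 : Module.finrank (ZMod 2) (LinearMap.range (ss h)) = numComp h := by
    rw [e3, finrank_top, Module.finrank_pi, numComp, Nat.card_eq_fintype_card]
  have e5 : Module.finrank (ZMod 2) (LinearMap.ker (ss h)) =
      Module.finrank (ZMod 2) (LinearMap.range (dd h)) := by rw [range_eq_ker hnd]
  rw [e1] at r1
  rw [e2, e4, e5] at r2
  omega

lemma card_even_mul (hnd : ∀ e ∈ h, ¬ e.IsDiag) :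
    (h.powerset.filter fun F => EvenSet F).card * 2 ^ (Fintype.card V)
      = 2 ^ (h.card + numComp h) := by
  rw [card_even_eq h]
  have hcard := card_eq_pow_finrank (K := ZMod 2) (V := LinearMap.ker (dd h))
  rw [ZMod.card] at hcard
  rw [hcard, ← pow_add, finrank_ker h hnd]

end
end CCAux

/-- Converse coupling: let `F` be a random even subgraph of `G` with parameter `p ≤ 1/2`,
and independently colour each edge `e ∉ F` blue with probability `p/(1-p)`.  Then
`H = F ∪ {blue edges}` has the random-cluster distribution `φ_{2p,2}`: for every `h ⊆ E`,
`P(H = h) = (2p)^{|h|}(1-2p)^{|E∖h|} 2^{k(h)} / Z^{RC}`. -/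
theorem converse_coupling {V : Type} [Fintype V] [DecidableEq V]
    (G : SimpleGraph V) [DecidableRel G.Adj] (p : ℝ) (hp0 : 0 < p) (hp : p ≤ 1 / 2)
    (h : Finset (Sym2 V)) (hh : h ⊆ G.edgeFinset) :
    (∑ F ∈ h.powerset.filter (fun F => EvenSet F),
        (p ^ F.card * (1 - p) ^ (G.edgeFinset.card - F.card) /
            (∑ F' ∈ G.edgeFinset.powerset.filter (fun F' => EvenSet F'),
              (p ^ F'.card * (1 - p) ^ (G.edgeFinset.card - F'.card) : ℝ))) *
          (p / (1 - p)) ^ (h \ F).card *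
          ((1 - 2 * p) / (1 - p)) ^ (G.edgeFinset.card - h.card)) =
      ((2 * p) ^ h.card * (1 - 2 * p) ^ (G.edgeFinset.card - h.card) * 2 ^ numComp h) /
        (∑ ω ∈ G.edgeFinset.powerset,
          ((2 * p) ^ ω.card * (1 - 2 * p) ^ (G.edgeFinset.card - ω.card) *
            2 ^ numComp ω : ℝ)) := by
  classical
  have hndE : ∀ ω : Finset (Sym2 V), ω ⊆ G.edgeFinset → ∀ e ∈ ω, ¬ e.IsDiag := by
    intro ω hω e he
    exact SimpleGraph.not_isDiag_of_mem_edgeSet G (SimpleGraph.mem_edgeFinset.mp (hω he))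
  have hp1 : (0 : ℝ) < 1 - p := by linarith
  set E := G.edgeFinset with hE
  set m := E.card with hm
  set n := Fintype.card V with hn
  have hcount : ∀ ω : Finset (Sym2 V), ω ⊆ E →
      ((ω.powerset.filter fun F => EvenSet F).card : ℝ) * 2 ^ n
        = 2 ^ (ω.card + numComp ω) := by
    intro ω hω
    exact_mod_cast congrArg (Nat.cast : ℕ → ℝ) (CCAux.card_even_mul ω (hndE ω hω))
  set Z : ℝ := ∑ F' ∈ E.powerset.filter fun F' => EvenSet F',
    p ^ F'.card * (1 - p) ^ (m - F'.card) with hZ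
  have hZpos : 0 < Z := by
    rw [hZ]
    apply Finset.sum_pos'
    · intro i _; positivity
    · refine ⟨∅, Finset.mem_filter.mpr ⟨Finset.empty_mem_powerset _, fun v => by simp⟩, ?_⟩
      simp only [Finset.card_empty, pow_zero, one_mul, Nat.sub_zero]
      positivity
  have hinner : ∀ F : Finset (Sym2 V), F ⊆ E →
      (∑ ω ∈ E.powerset.filter (fun ω => F ⊆ ω),
          p ^ ω.card * (1 - 2 * p) ^ (m - ω.card))
        = p ^ F.card * (1 - p) ^ (m - F.card) := by
    intro F hF
    have hstep : (∑ ω ∈ E.powerset.filter (fun ω => F ⊆ ω),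
          p ^ ω.card * (1 - 2 * p) ^ (m - ω.card))
        = ∑ S ∈ (E \ F).powerset,
            p ^ (S.card + F.card) * (1 - 2 * p) ^ ((E \ F).card - S.card) := by
      refine Finset.sum_nbij' (fun ω => ω \ F) (fun S => S ∪ F) ?_ ?_ ?_ ?_ ?_
      · intro ω hω
        rw [Finset.mem_filter, Finset.mem_powerset] at hω
        exact Finset.mem_powerset.mpr (Finset.sdiff_subset_sdiff hω.1 (Finset.Subset.refl F))
      · intro S hS
        rw [Finset.mem_powerset] at hS
        exact Finset.mem_filter.mpr ⟨Finset.mem_powerset.mpr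
          (Finset.union_subset (hS.trans Finset.sdiff_subset) hF), Finset.subset_union_right⟩
      · intro ω hω
        rw [Finset.mem_filter] at hω
        exact Finset.sdiff_union_of_subset hω.2
      · intro S hS
        rw [Finset.mem_powerset] at hS
        have hd : Disjoint S F :=
          Finset.disjoint_of_subset_left hS Finset.sdiff_disjoint
        ext a
        simp only [Finset.mem_sdiff, Finset.mem_union]
        constructor
        · rintro ⟨ha | ha, haF⟩
          · exact ha
          · exact absurd ha haF
        · intro ha
          exact ⟨Or.inl ha, fun hf => Finset.disjoint_left.mp hd ha hf⟩
      · intro ω hω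
        rw [Finset.mem_filter, Finset.mem_powerset] at hω
        have h1 : (ω \ F).card = ω.card - F.card := Finset.card_sdiff_of_subset hω.2
        have h2 : F.card ≤ ω.card := Finset.card_le_card hω.2
        have h3 : ω.card ≤ m := Finset.card_le_card hω.1
        have h4 : (E \ F).card = m - F.card := Finset.card_sdiff_of_subset hF
        rw [h1, h4, show ω.card - F.card + F.card = ω.card by omega,
          show m - F.card - (ω.card - F.card) = m - ω.card by omega]
    rw [hstep]
    have hA : (E \ F).card = m - F.card := Finset.card_sdiff_of_subset hF
    have hbin := Finset.prod_add (fun _ : Sym2 V => p) (fun _ => 1 - 2 * p) (E \ F)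
    rw [Finset.prod_const] at hbin
    simp only [Finset.prod_const] at hbin
    have hre : (∑ S ∈ (E \ F).powerset,
          p ^ (S.card + F.card) * (1 - 2 * p) ^ ((E \ F).card - S.card))
        = p ^ F.card * ∑ S ∈ (E \ F).powerset,
            p ^ S.card * (1 - 2 * p) ^ ((E \ F) \ S).card := by
      rw [Finset.mul_sum]
      refine Finset.sum_congr rfl fun S hS => ?_
      rw [Finset.mem_powerset] at hS
      rw [Finset.card_sdiff_of_subset hS, pow_add]
      ring
    rw [hre, ← hbin, show p + (1 - 2 * p) = 1 - p by ring, hA]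
  have hZRC : (∑ ω ∈ E.powerset,
        ((2 * p) ^ ω.card * (1 - 2 * p) ^ (m - ω.card) * 2 ^ numComp ω : ℝ))
      = 2 ^ n * Z := by
    have step1 : ∀ ω ∈ E.powerset,
        ((2 * p) ^ ω.card * (1 - 2 * p) ^ (m - ω.card) * 2 ^ numComp ω : ℝ)
          = 2 ^ n * ∑ F ∈ ω.powerset.filter (fun F => EvenSet F),
              p ^ ω.card * (1 - 2 * p) ^ (m - ω.card) := by
      intro ω hω
      rw [Finset.sum_const, nsmul_eq_mul]
      have hc := hcount ω (Finset.mem_powerset.mp hω)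
      rw [mul_pow]
      calc (2 : ℝ) ^ ω.card * p ^ ω.card * (1 - 2 * p) ^ (m - ω.card) * 2 ^ numComp ω
          = ((2 : ℝ) ^ (ω.card + numComp ω)) *
              (p ^ ω.card * (1 - 2 * p) ^ (m - ω.card)) := by rw [pow_add]; ring
        _ = (((ω.powerset.filter fun F => EvenSet F).card : ℝ) * 2 ^ n) *
              (p ^ ω.card * (1 - 2 * p) ^ (m - ω.card)) := by rw [hc]
        _ = 2 ^ n * (((ω.powerset.filter fun F => EvenSet F).card : ℝ) *
              (p ^ ω.card * (1 - 2 * p) ^ (m - ω.card))) := by ring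
    rw [Finset.sum_congr rfl step1, ← Finset.mul_sum]
    congr 1
    rw [Finset.sum_comm' (s := E.powerset)
      (t := fun ω => ω.powerset.filter fun F => EvenSet F)
      (t' := E.powerset.filter fun F => EvenSet F)
      (s' := fun F => E.powerset.filter fun ω => F ⊆ ω)
      (by
        intro ω F
        simp only [Finset.mem_powerset, Finset.mem_filter]
        constructor
        · rintro ⟨h1, h2, h3⟩
          exact ⟨⟨h1, h2⟩, h2.trans h1, h3⟩
        · rintro ⟨⟨h1, h2⟩, h3, h4⟩
          exact ⟨h1, h2, h4⟩)]
    exact Finset.sum_congr rfl fun F hF =>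
      hinner F (Finset.mem_powerset.mp (Finset.mem_filter.mp hF).1)
  rw [hZRC]
  have hterm : ∀ F ∈ h.powerset.filter fun F => EvenSet F,
      (p ^ F.card * (1 - p) ^ (m - F.card) / Z) * (p / (1 - p)) ^ (h \ F).card *
          ((1 - 2 * p) / (1 - p)) ^ (m - h.card)
        = p ^ h.card * (1 - 2 * p) ^ (m - h.card) / Z := by
    intro F hF
    have hFh : F ⊆ h := Finset.mem_powerset.mp (Finset.mem_filter.mp hF).1
    have h1 : F.card ≤ h.card := Finset.card_le_card hFh
    have h2 : h.card ≤ m := Finset.card_le_card hh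
    rw [Finset.card_sdiff_of_subset hFh,
      show m - F.card = (m - h.card) + (h.card - F.card) by omega, pow_add,
      div_pow, div_pow,
      show h.card = F.card + (h.card - F.card) by omega, pow_add]
    have e1 : ((1 - p) : ℝ) ^ (h.card - F.card) ≠ 0 := pow_ne_zero _ hp1.ne'
    have e2 : ((1 - p) : ℝ) ^ (m - h.card) ≠ 0 := pow_ne_zero _ hp1.ne'
    field_simp
    simp only [Nat.add_sub_cancel_left]
    ring
  rw [Finset.sum_congr rfl hterm, Finset.sum_const, nsmul_eq_mul]
  have hch := hcount h hh
  rw [← mul_div_assoc, div_eq_div_iff hZpos.ne' (mul_pos (by positivity) hZpos).ne']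
  linear_combination (p ^ h.card * (1 - 2 * p) ^ (m - h.card) * Z) * hch
end

section
/- Generalized coupling (Theorem for p > 1/2 included): Let G = (V,E) be finite, p_e ∈ (0,1) for each edge, A = {e : p_e > 1/2}, r_e = 2p_e for e ∉ A and r_e = 2(1-p_e) for e ∈ A, and let W be the set of vertices incident to an odd number of edges of A. Sample ω from the random-cluster measure with parameters (r_e) and q = 2 conditioned on η(ω) being W-even; choose edge-disjoint open paths P_ω pairing up the vertices of W; sample a uniform random even subgraph γ of (V,η(ω)). Then F = γ Δ P_ω Δ A is even and has distribution ρ_p(F) ∝ Π_{e∈F} p_e Π_{e∉F}(1-p_e) over even F. -/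
open Finset
open scoped Classical

/-- `ω` is `W`-even: every component of the open graph `(V, ω)` contains an even number of
vertices of `W`. -/
def WEven {V : Type} [Fintype V] [DecidableEq V] (W : Finset V) (ω : Finset (Sym2 V)) : Prop :=
  ∀ c : (SimpleGraph.fromEdgeSet (↑ω : Set (Sym2 V))).ConnectedComponent,
    Even ((W.filter (fun v =>
      (SimpleGraph.fromEdgeSet (↑ω : Set (Sym2 V))).connectedComponentMk v = c)).card)


open scoped symmDiff

section BasicHelpers

variable {α : Type*} [DecidableEq α]

lemma card_symmDiff_key (s t : Finset α) :
    (s ∆ t).card + 2 * (s ∩ t).card = s.card + t.card := by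
  have h1 : (s ∆ t) ∪ (s ∩ t) = s ∪ t := by
    ext a; simp [Finset.mem_symmDiff]; tauto
  have h2 : Disjoint (s ∆ t) (s ∩ t) := by
    rw [Finset.disjoint_left]; intro a ha hb
    simp [Finset.mem_symmDiff] at ha
    simp at hb; tauto
  have h3 := Finset.card_union_of_disjoint h2
  rw [h1] at h3
  have h4 := Finset.card_union_add_card_inter s t
  omega

lemma even_card_symmDiff (s t : Finset α) :
    Even (s ∆ t).card ↔ (Even s.card ↔ Even t.card) := by
  have := card_symmDiff_key s t
  simp only [Nat.even_iff]
  omega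

lemma filter_symmDiff' (s t : Finset α) (p : α → Prop) [DecidablePred p] :
    (s ∆ t).filter p = (s.filter p) ∆ (t.filter p) := by
  ext a; simp [Finset.mem_symmDiff, Finset.mem_filter]; tauto

lemma prod_ite_mem_split (s t : Finset α) (ht : t ⊆ s) (a b : α → ℝ) :
    ∏ e ∈ s, (if e ∈ t then a e else b e) = (∏ e ∈ t, a e) * ∏ e ∈ s \ t, b e := by
  rw [← Finset.union_sdiff_of_subset ht, Finset.prod_union Finset.disjoint_sdiff]
  rw [Finset.union_sdiff_of_subset ht]
  congr 1
  · exact Finset.prod_congr rfl (fun e he => if_pos (by exact he))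
  · exact Finset.prod_congr rfl (fun e he => if_neg (Finset.mem_sdiff.mp he).2)

lemma sum_filter_superset (E g : Finset α) (hg : g ⊆ E) (a b : α → ℝ) :
    ∑ ω ∈ E.powerset.filter (fun ω => g ⊆ ω), ∏ e ∈ E, (if e ∈ ω then a e else b e)
      = (∏ e ∈ g, a e) * ∏ e ∈ E \ g, (a e + b e) := by
  rw [Finset.prod_add, Finset.mul_sum]
  refine Finset.sum_nbij' (fun ω => ω \ g) (fun t => g ∪ t) ?_ ?_ ?_ ?_ ?_
  · intro ω hω
    simp only [Finset.mem_filter, Finset.mem_powerset] at hω ⊢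
    exact Finset.sdiff_subset_sdiff hω.1 (Finset.Subset.refl _)
  · intro t ht
    simp only [Finset.mem_powerset] at ht
    simp only [Finset.mem_filter, Finset.mem_powerset]
    constructor
    · exact Finset.union_subset hg (ht.trans (Finset.sdiff_subset))
    · exact Finset.subset_union_left
  · intro ω hω
    simp only [Finset.mem_filter, Finset.mem_powerset] at hω
    exact Finset.union_sdiff_of_subset hω.2
  · intro t ht
    simp only [Finset.mem_powerset] at ht
    exact Finset.union_sdiff_cancel_left
      (Finset.disjoint_of_subset_right ht Finset.disjoint_sdiff)
  · intro ω hω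
    simp only [Finset.mem_filter, Finset.mem_powerset] at hω
    obtain ⟨hωE, hgω⟩ := hω
    rw [prod_ite_mem_split E ω hωE a b]
    have hωsplit : ∏ e ∈ ω, a e = (∏ e ∈ g, a e) * ∏ e ∈ ω \ g, a e := by
      rw [← Finset.prod_union Finset.disjoint_sdiff, Finset.union_sdiff_of_subset hgω]
    have hEs : E \ ω = (E \ g) \ (ω \ g) := by
      ext e
      have hge : e ∈ g → e ∈ ω := fun hc => hgω hc
      simp only [Finset.mem_sdiff]
      tauto

    rw [hωsplit, hEs, mul_assoc]

end BasicHelpers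

section DegLemmas

variable {V : Type} [Fintype V] [DecidableEq V]

lemma deg_symmDiff_even_iff (F G : Finset (Sym2 V)) (v : V) :
    Even (((F ∆ G).filter (fun e => v ∈ e)).card) ↔
      (Even ((F.filter (fun e => v ∈ e)).card) ↔ Even ((G.filter (fun e => v ∈ e)).card)) := by
  rw [filter_symmDiff', even_card_symmDiff]

lemma even_card_filter_mem (e : Sym2 V) (he : ¬ e.IsDiag) (S : Finset V)
    (hcl : ∀ x ∈ e, ∀ y ∈ e, x ∈ S → y ∈ S) :
    Even ((S.filter (fun v => v ∈ e)).card) := by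
  induction e with | _ a b =>
  have hab : a ≠ b := by simpa using he
  by_cases ha : a ∈ S
  · have hb : b ∈ S := hcl a (by simp) b (by simp) ha
    have hS : S.filter (fun v => v ∈ (s(a,b) : Sym2 V)) = {a, b} := by
      ext v; simp only [Finset.mem_filter, Sym2.mem_iff, Finset.mem_insert,
        Finset.mem_singleton]
      constructor
      · rintro ⟨-, h⟩; exact h
      · rintro (rfl | rfl) <;> simp [ha, hb]
    rw [hS, Finset.card_insert_of_notMem (by simp [hab]), Finset.card_singleton]
    exact ⟨1, rfl⟩
  · have hb : b ∉ S := fun hb => ha (hcl b (by simp) a (by simp) hb)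
    have hS : S.filter (fun v => v ∈ (s(a,b) : Sym2 V)) = ∅ := by
      ext v; simp only [Finset.mem_filter, Sym2.mem_iff, Finset.notMem_empty, iff_false]
      rintro ⟨hv, rfl | rfl⟩ <;> tauto
    rw [hS]
    simp

lemma even_sum_deg (H : Finset (Sym2 V)) (hH : ∀ e ∈ H, ¬ e.IsDiag) (S : Finset V)
    (hcl : ∀ e ∈ H, ∀ x ∈ e, ∀ y ∈ e, x ∈ S → y ∈ S) :
    Even (∑ v ∈ S, (H.filter (fun e => v ∈ e)).card) := by
  have swap : ∑ v ∈ S, (H.filter (fun e => v ∈ e)).card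
      = ∑ e ∈ H, (S.filter (fun v => v ∈ e)).card := by
    have h := Finset.sum_comm (s := S) (t := H) (f := fun v e => if v ∈ e then (1:ℕ) else 0)
    simpa only [Finset.card_filter] using h
  rw [swap]
  apply Finset.even_sum
  intro e he
  exact even_card_filter_mem e (hH e he) S (hcl e he)

/-- If `g ⊆ ω` has odd degree exactly on `W`, then `ω` is `W`-even. -/
lemma wEven_of_subset_odd (W : Finset V) (ω g : Finset (Sym2 V)) (hg : g ⊆ ω)
    (hnd : ∀ e ∈ g, ¬ e.IsDiag)
    (hWg : ∀ v, Odd ((g.filter (fun e => v ∈ e)).card) ↔ v ∈ W) :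
    WEven W ω := by
  intro c
  have hcl : ∀ e ∈ g, ∀ x ∈ e, ∀ y ∈ e,
      x ∈ Finset.univ.filter
        (fun v => (SimpleGraph.fromEdgeSet (↑ω : Set (Sym2 V))).connectedComponentMk v = c) →
      y ∈ Finset.univ.filter
        (fun v => (SimpleGraph.fromEdgeSet (↑ω : Set (Sym2 V))).connectedComponentMk v = c) := by
    intro e heg x hx y hy hxS
    simp only [Finset.mem_filter, Finset.mem_univ, true_and] at hxS ⊢
    rcases eq_or_ne x y with rfl | hxy
    · exact hxS
    · have hadj : (SimpleGraph.fromEdgeSet (↑ω : Set (Sym2 V))).Adj x y := by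
        rw [SimpleGraph.fromEdgeSet_adj]
        refine ⟨?_, hxy⟩
        have he : e = s(x, y) := (Sym2.mem_and_mem_iff hxy).mp ⟨hx, hy⟩
        simpa [← he] using hg heg
      rw [← hxS]
      exact (SimpleGraph.ConnectedComponent.connectedComponentMk_eq_of_adj hadj).symm
  have hev := even_sum_deg g hnd _ hcl
  rw [Finset.even_sum_iff_even_card_odd] at hev
  have hset : W.filter
        (fun v => (SimpleGraph.fromEdgeSet (↑ω : Set (Sym2 V))).connectedComponentMk v = c)
      = (Finset.univ.filter
        (fun v => (SimpleGraph.fromEdgeSet (↑ω : Set (Sym2 V))).connectedComponentMk v = c)).filter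
          (fun v => Odd ((g.filter (fun e => v ∈ e)).card)) := by
    ext v
    simp only [Finset.mem_filter, Finset.mem_univ, true_and]
    rw [← hWg v]
    tauto
  rw [hset]
  exact hev

lemma path_odd_deg {G : SimpleGraph V} {a b : V} (p : G.Walk a b) (hp : p.IsPath) (x : V) :
    Odd ((p.edges.toFinset.filter (fun e => x ∈ e)).card) ↔ ((x = a ∨ x = b) ∧ a ≠ b) := by
  induction p with
  | nil => simp [SimpleGraph.Walk.edges_nil]
  | @cons u c b h q ih =>
    rw [SimpleGraph.Walk.cons_isPath_iff] at hp
    obtain ⟨hq, hu⟩ := hp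
    have huc : u ≠ c := h.ne
    have hub : u ≠ b := fun h' => hu (h' ▸ q.end_mem_support)
    have hnotmem : s(u, c) ∉ q.edges := fun hmem =>
      hu (q.fst_mem_support_of_mem_edges hmem)
    have hins : (SimpleGraph.Walk.cons h q).edges.toFinset
        = insert s(u, c) q.edges.toFinset := by
      simp [SimpleGraph.Walk.edges_cons]
    have ihx := ih hq
    rw [hins, Finset.filter_insert]
    by_cases hx : x ∈ (s(u, c) : Sym2 V)
    · rw [if_pos hx, Finset.card_insert_of_notMem (by simp [hnotmem]), Nat.odd_add_one]
      rcases Sym2.mem_iff.mp hx with hxu | hxc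
      · -- x = u
        have hxsup : x ∉ q.support := hxu ▸ hu
        have hdq : q.edges.toFinset.filter (fun e => x ∈ e) = ∅ := by
          ext e
          simp only [Finset.mem_filter, List.mem_toFinset, Finset.notMem_empty, iff_false]
          rintro ⟨he, hxe⟩
          induction e with | _ y z =>
          rcases Sym2.mem_iff.mp hxe with rfl | rfl
          · exact hxsup (q.fst_mem_support_of_mem_edges he)
          · exact hxsup (q.snd_mem_support_of_mem_edges he)
        rw [hdq]
        simp [hxu, hub]
      · -- x = c
        constructor
        · intro hev
          have hxb : x = b := by
            by_contra hxb
            exact hev (ihx.mpr ⟨Or.inl hxc, fun hcb => hxb (hxc.trans hcb)⟩)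
          exact ⟨Or.inr hxb, hub⟩
        · rintro ⟨hor, -⟩
          have hxb : x = b := by
            rcases hor with h' | h'
            · exact absurd (h'.symm.trans hxc) huc
            · exact h'
          intro hodd
          exact (ihx.mp hodd).2 (hxc.symm.trans hxb)
    · rw [if_neg hx, ihx]
      have hxu : x ≠ u := fun h' => hx (by simp [h'])
      have hxc : x ≠ c := fun h' => hx (by simp [h'])
      constructor
      · rintro ⟨hor, hcb⟩
        rcases hor with h' | h'
        · exact absurd h' hxc
        · exact ⟨Or.inr h', hub⟩
      · rintro ⟨hor, -⟩
        rcases hor with h' | h'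
        · exact absurd h' hxu
        · have hcb : c ≠ b := fun hcb => hxc (h'.trans hcb.symm)
          exact ⟨Or.inr h', hcb⟩

end DegLemmas

section CompCount

variable {V : Type} [Fintype V] [DecidableEq V]

lemma reach_decomp {G G' : SimpleGraph V} {u v : V}
    (hadj : ∀ a b, G'.Adj a b → G.Adj a b ∨ (a = u ∧ b = v) ∨ (a = v ∧ b = u))
    {x y : V} (w : G'.Walk x y) :
    G.Reachable x y ∨ (G.Reachable x u ∧ G.Reachable v y) ∨
      (G.Reachable x v ∧ G.Reachable u y) := by
  induction w with
  | nil => exact Or.inl (SimpleGraph.Reachable.refl _)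
  | @cons a c d had q ih =>
    rcases hadj a c had with h | ⟨rfl, rfl⟩ | ⟨rfl, rfl⟩
    · rcases ih with h2 | ⟨h2, h3⟩ | ⟨h2, h3⟩
      · exact Or.inl (h.reachable.trans h2)
      · exact Or.inr (Or.inl ⟨h.reachable.trans h2, h3⟩)
      · exact Or.inr (Or.inr ⟨h.reachable.trans h2, h3⟩)
    · rcases ih with h2 | ⟨h2, h3⟩ | ⟨h2, h3⟩
      · exact Or.inr (Or.inl ⟨SimpleGraph.Reachable.refl _, h2⟩)
      · exact Or.inl (h2.symm.trans h3)
      · exact Or.inl h3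
    · rcases ih with h2 | ⟨h2, h3⟩ | ⟨h2, h3⟩
      · exact Or.inr (Or.inr ⟨SimpleGraph.Reachable.refl _, h2⟩)
      · exact Or.inl h3
      · exact Or.inl (h2.symm.trans h3)

lemma adj_insert_decomp (ω : Finset (Sym2 V)) (u v a b : V)
    (hadj : (SimpleGraph.fromEdgeSet (↑(insert s(u,v) ω) : Set (Sym2 V))).Adj a b) :
    (SimpleGraph.fromEdgeSet (↑ω : Set (Sym2 V))).Adj a b ∨ (a = u ∧ b = v) ∨
      (a = v ∧ b = u) := by
  rw [SimpleGraph.fromEdgeSet_adj] at hadj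
  obtain ⟨hmem, hne⟩ := hadj
  rw [Finset.coe_insert, Set.mem_insert_iff] at hmem
  rcases hmem with heq | hmem
  · right; exact Sym2.eq_iff.mp heq
  · left; rw [SimpleGraph.fromEdgeSet_adj]; exact ⟨hmem, hne⟩

lemma numComp_insert_reachable (ω : Finset (Sym2 V)) (u v : V) (huv : u ≠ v)
    (h : (SimpleGraph.fromEdgeSet (↑ω : Set (Sym2 V))).Reachable u v) :
    numComp (insert s(u,v) ω) = numComp ω := by
  set G := SimpleGraph.fromEdgeSet (↑ω : Set (Sym2 V))
  set G' := SimpleGraph.fromEdgeSet (↑(insert s(u,v) ω) : Set (Sym2 V))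
  have hle : G ≤ G' := SimpleGraph.fromEdgeSet_mono (by
    rw [Finset.coe_insert]; exact Set.subset_insert _ _)
  set φ : G.ConnectedComponent → G'.ConnectedComponent :=
    SimpleGraph.ConnectedComponent.map (SimpleGraph.Hom.ofLE hle) with hφ
  have hφmk : ∀ x : V, φ (G.connectedComponentMk x) = G'.connectedComponentMk x := by
    intro x; simp [hφ, SimpleGraph.ConnectedComponent.map_mk]
  have hbij : Function.Bijective φ := by
    constructor
    · intro a a'
      refine SimpleGraph.ConnectedComponent.ind₂ (fun x y hxy => ?_) a a'
      rw [hφmk, hφmk] at hxy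
      have hr : G'.Reachable x y := SimpleGraph.ConnectedComponent.eq.mp hxy
      obtain ⟨w⟩ := hr
      rcases reach_decomp (adj_insert_decomp ω u v) w with h2 | ⟨h2, h3⟩ | ⟨h2, h3⟩
      · exact SimpleGraph.ConnectedComponent.eq.mpr h2
      · exact SimpleGraph.ConnectedComponent.eq.mpr (h2.trans (h.trans h3))
      · exact SimpleGraph.ConnectedComponent.eq.mpr (h2.trans (h.symm.trans h3))
    · intro b
      refine SimpleGraph.ConnectedComponent.ind (fun x => ⟨G.connectedComponentMk x, hφmk x⟩) b
  exact (Nat.card_eq_of_bijective φ hbij).symm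

lemma numComp_insert_not_reachable (ω : Finset (Sym2 V)) (u v : V) (huv : u ≠ v)
    (h : ¬ (SimpleGraph.fromEdgeSet (↑ω : Set (Sym2 V))).Reachable u v) :
    numComp ω = numComp (insert s(u,v) ω) + 1 := by
  set G := SimpleGraph.fromEdgeSet (↑ω : Set (Sym2 V))
  set G' := SimpleGraph.fromEdgeSet (↑(insert s(u,v) ω) : Set (Sym2 V))
  have hle : G ≤ G' := SimpleGraph.fromEdgeSet_mono (by
    rw [Finset.coe_insert]; exact Set.subset_insert _ _)
  set φ : G.ConnectedComponent → G'.ConnectedComponent :=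
    SimpleGraph.ConnectedComponent.map (SimpleGraph.Hom.ofLE hle) with hφ
  have hφmk : ∀ x : V, φ (G.connectedComponentMk x) = G'.connectedComponentMk x := by
    intro x; simp [hφ, SimpleGraph.ConnectedComponent.map_mk]
  have hedge : G'.Adj u v := by
    rw [SimpleGraph.fromEdgeSet_adj]
    exact ⟨by rw [Finset.coe_insert]; exact Set.mem_insert _ _, huv⟩
  have key : ∀ b : G'.ConnectedComponent,
      (Finset.univ.filter (fun a => φ a = b)).card
        = 1 + (if b = φ (G.connectedComponentMk u) then 1 else 0) := by
    intro b
    by_cases hb : b = φ (G.connectedComponentMk u)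
    · subst hb
      rw [if_pos rfl]
      have hset : Finset.univ.filter (fun a => φ a = φ (G.connectedComponentMk u))
          = {G.connectedComponentMk u, G.connectedComponentMk v} := by
        ext a
        induction a using SimpleGraph.ConnectedComponent.ind with | _ x =>
        simp only [Finset.mem_filter, Finset.mem_univ, true_and, Finset.mem_insert,
          Finset.mem_singleton]
        constructor
        · intro hfa
          rw [hφmk, hφmk] at hfa
          obtain ⟨w⟩ := SimpleGraph.ConnectedComponent.eq.mp hfa
          rcases reach_decomp (adj_insert_decomp ω u v) w with h2 | ⟨h2, h3⟩ | ⟨h2, h3⟩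
          · exact Or.inl (SimpleGraph.ConnectedComponent.eq.mpr h2)
          · exact Or.inl (SimpleGraph.ConnectedComponent.eq.mpr h2)
          · exact Or.inr (SimpleGraph.ConnectedComponent.eq.mpr h2)
        · rintro (hc | hc)
          · rw [hc]
          · rw [hc, hφmk, hφmk]
            exact (SimpleGraph.ConnectedComponent.eq.mpr hedge.reachable).symm
      rw [hset]
      rw [Finset.card_insert_of_notMem, Finset.card_singleton]
      simp only [Finset.mem_singleton]
      intro hcon
      exact h (SimpleGraph.ConnectedComponent.eq.mp hcon)
    · rw [if_neg hb]
      induction b using SimpleGraph.ConnectedComponent.ind with | _ x =>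
      have hset : Finset.univ.filter (fun a => φ a = G'.connectedComponentMk x)
          = {G.connectedComponentMk x} := by
        ext a
        induction a using SimpleGraph.ConnectedComponent.ind with | _ y =>
        simp only [Finset.mem_filter, Finset.mem_univ, true_and, Finset.mem_singleton]
        constructor
        · intro hfa
          rw [hφmk] at hfa
          obtain ⟨w⟩ := SimpleGraph.ConnectedComponent.eq.mp hfa
          rcases reach_decomp (adj_insert_decomp ω u v) w with h2 | ⟨h2, h3⟩ | ⟨h2, h3⟩
          · exact SimpleGraph.ConnectedComponent.eq.mpr h2
          · exfalso
            apply hb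
            rw [hφmk]
            exact hfa.symm.trans (SimpleGraph.ConnectedComponent.eq.mpr (h2.mono hle))
          · exfalso
            apply hb
            rw [hφmk]
            exact (SimpleGraph.ConnectedComponent.eq.mpr (h3.mono hle)).symm
        · intro hc
          rw [hc, hφmk]
      rw [hset, Finset.card_singleton]
  have hcount := Finset.card_eq_sum_card_fiberwise
    (f := φ) (s := Finset.univ) (t := Finset.univ) (fun x _ => Finset.mem_univ _)
  rw [Finset.sum_congr rfl (fun b _ => key b)] at hcount
  rw [Finset.sum_add_distrib, Finset.sum_ite_eq' Finset.univ
    (φ (G.connectedComponentMk u)) (fun _ => 1)] at hcount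
  simp only [Finset.sum_const, Finset.card_univ, smul_eq_mul, mul_one,
    Finset.mem_univ, if_pos] at hcount
  have h1 : numComp ω = Fintype.card G.ConnectedComponent := by
    rw [numComp, Nat.card_eq_fintype_card]
  have h2 : numComp (insert s(u,v) ω) = Fintype.card G'.ConnectedComponent := by
    rw [numComp, Nat.card_eq_fintype_card]
  rw [h1, h2]
  exact hcount

end CompCount

section EvenCount

variable {V : Type} [Fintype V] [DecidableEq V]

/-- In the non-reachable case, no even subgraph uses the new edge. -/
lemma numEvenIn_insert_not_reachable (ω : Finset (Sym2 V)) (u v : V) (huv : u ≠ v)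
    (hnd : ∀ e ∈ ω, ¬ e.IsDiag)
    (h : ¬ (SimpleGraph.fromEdgeSet (↑ω : Set (Sym2 V))).Reachable u v) :
    numEvenIn (insert s(u,v) ω) = numEvenIn ω := by
  unfold numEvenIn
  congr 1
  ext F
  simp only [Finset.mem_filter, Finset.mem_powerset]
  constructor
  · rintro ⟨hFsub, hFev⟩
    refine ⟨?_, hFev⟩
    intro x hx
    rcases Finset.mem_insert.mp (hFsub hx) with hxe | hxo
    · -- x = s(u,v) ∈ F : contradiction
      exfalso
      subst hxe
      set G := SimpleGraph.fromEdgeSet (↑ω : Set (Sym2 V)) with hG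
      set S : Finset V := Finset.univ.filter (fun y => G.Reachable u y) with hSdef
      have huS : u ∈ S := by
        simp only [hSdef, Finset.mem_filter, Finset.mem_univ, true_and]
        exact SimpleGraph.Reachable.refl u
      have hvS : v ∉ S := by simp [hSdef]; exact h
      set F' : Finset (Sym2 V) := F.erase s(u,v) with hF'def
      have hF'sub : F' ⊆ ω := by
        intro y hy
        obtain ⟨hne, hyF⟩ := Finset.mem_erase.mp hy
        rcases Finset.mem_insert.mp (hFsub hyF) with h1 | h1
        · exact absurd h1 hne
        · exact h1
      have hF'nd : ∀ e ∈ F', ¬ e.IsDiag := fun e he => hnd e (hF'sub he)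
      have hcl : ∀ e ∈ F', ∀ x ∈ e, ∀ y ∈ e, x ∈ S → y ∈ S := by
        intro e he x hxe y hye hxS
        simp only [hSdef, Finset.mem_filter, Finset.mem_univ, true_and] at hxS ⊢
        rcases eq_or_ne x y with rfl | hxy
        · exact hxS
        · have : G.Adj x y := by
            rw [hG, SimpleGraph.fromEdgeSet_adj]
            refine ⟨?_, hxy⟩
            have he2 : e = s(x, y) := (Sym2.mem_and_mem_iff hxy).mp ⟨hxe, hye⟩
            simpa [← he2] using hF'sub he
          exact hxS.trans this.reachable
      have hev' := even_sum_deg F' hF'nd S hcl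
      have hdecomp : ∀ x2 : V, (F.filter (fun e => x2 ∈ e)).card
          = (F'.filter (fun e => x2 ∈ e)).card + (if x2 ∈ (s(u,v) : Sym2 V) then 1 else 0) := by
        intro x2
        have hFeq : F = insert s(u,v) F' := by
          rw [hF'def, Finset.insert_erase hx]
        rw [hFeq, Finset.filter_insert]
        by_cases hx2 : x2 ∈ (s(u,v) : Sym2 V)
        · rw [if_pos hx2, if_pos hx2, Finset.card_insert_of_notMem]
          intro hc
          exact Finset.notMem_erase _ _ ((Finset.mem_filter.mp hc).1)
        · rw [if_neg hx2, if_neg hx2, add_zero]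
      have hsum : ∑ x2 ∈ S, (F.filter (fun e => x2 ∈ e)).card
          = (∑ x2 ∈ S, (F'.filter (fun e => x2 ∈ e)).card)
            + (S.filter (fun x2 => x2 ∈ (s(u,v) : Sym2 V))).card := by
        rw [Finset.sum_congr rfl (fun x2 _ => hdecomp x2), Finset.sum_add_distrib]
        congr 1
        rw [Finset.card_filter]
      have hone : (S.filter (fun x2 => x2 ∈ (s(u,v) : Sym2 V))).card = 1 := by
        have : S.filter (fun x2 => x2 ∈ (s(u,v) : Sym2 V)) = {u} := by
          ext y
          simp only [Finset.mem_filter, Sym2.mem_iff, Finset.mem_singleton]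
          constructor
          · rintro ⟨hyS, rfl | rfl⟩
            · rfl
            · exact absurd hyS hvS
          · rintro rfl; exact ⟨huS, Or.inl rfl⟩
        rw [this, Finset.card_singleton]
      have hevF : Even (∑ x2 ∈ S, (F.filter (fun e => x2 ∈ e)).card) := by
        apply Finset.even_sum
        intro x2 _
        exact hFev x2
      rw [hsum, hone] at hevF
      rw [Nat.even_add] at hevF
      simp only [Nat.even_iff] at hevF hev'
      omega
    · exact hxo
  · rintro ⟨hFsub, hFev⟩
    exact ⟨hFsub.trans (Finset.subset_insert _ _), hFev⟩

/-- In the reachable case, adding the edge doubles the number of even subgraphs. -/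
lemma numEvenIn_insert_reachable (ω : Finset (Sym2 V)) (u v : V) (huv : u ≠ v)
    (he : s(u,v) ∉ ω)
    (h : (SimpleGraph.fromEdgeSet (↑ω : Set (Sym2 V))).Reachable u v) :
    numEvenIn (insert s(u,v) ω) = 2 * numEvenIn ω := by
  obtain ⟨w⟩ := h
  have hppath : (w.toPath : (SimpleGraph.fromEdgeSet (↑ω : Set (Sym2 V))).Walk u v).IsPath :=
    w.toPath.2
  set C0 : Finset (Sym2 V) :=
    (w.toPath : (SimpleGraph.fromEdgeSet (↑ω : Set (Sym2 V))).Walk u v).edges.toFinset with hC0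
  have hC0sub : C0 ⊆ ω := by
    intro e he'
    have h1 := SimpleGraph.Walk.edges_subset_edgeSet _ (List.mem_toFinset.mp he')
    rw [SimpleGraph.edgeSet_fromEdgeSet] at h1
    exact h1.1
  have heC0 : s(u,v) ∉ C0 := fun hc => he (hC0sub hc)
  set C : Finset (Sym2 V) := insert s(u,v) C0 with hC
  have hCsub : C ⊆ insert s(u,v) ω := Finset.insert_subset_insert _ hC0sub
  have hCe : s(u,v) ∈ C := Finset.mem_insert_self _ _
  have hCev : EvenSet C := by
    intro x
    rw [hC, Finset.filter_insert]
    have hdeg := path_odd_deg _ hppath x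
    by_cases hx : x ∈ (s(u,v) : Sym2 V)
    · rw [if_pos hx, Finset.card_insert_of_notMem (by simp [heC0])]
      rw [Nat.even_add_one, Nat.not_even_iff_odd, hC0, hdeg]
      exact ⟨Sym2.mem_iff.mp hx, huv⟩
    · rw [if_neg hx]
      rw [← Nat.not_odd_iff_even, hC0, hdeg]
      rintro ⟨rfl | rfl, -⟩ <;> simp at hx
  set X := (insert s(u,v) ω).powerset.filter (fun F => EvenSet F) with hX
  have hsplit := Finset.card_filter_add_card_filter_not
    (s := X) (p := fun F => s(u,v) ∈ F)
  have hX2 : X.filter (fun F => ¬ s(u,v) ∈ F) = ω.powerset.filter (fun F => EvenSet F) := by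
    ext F
    simp only [hX, Finset.mem_filter, Finset.mem_powerset]
    constructor
    · rintro ⟨⟨hsub, hev⟩, hnot⟩
      refine ⟨?_, hev⟩
      intro x hxF
      rcases Finset.mem_insert.mp (hsub hxF) with h1 | h1
      · exact absurd (h1 ▸ hxF) hnot
      · exact h1
    · rintro ⟨hsub, hev⟩
      exact ⟨⟨hsub.trans (Finset.subset_insert _ _), hev⟩, fun hc => he (hsub hc)⟩
  have hbij : (X.filter (fun F => s(u,v) ∈ F)).card
      = (X.filter (fun F => ¬ s(u,v) ∈ F)).card := by
    refine Finset.card_bij' (fun F _ => F ∆ C) (fun F _ => F ∆ C) ?_ ?_ ?_ ?_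
    · intro F hF
      simp only [hX, Finset.mem_filter, Finset.mem_powerset] at hF ⊢
      obtain ⟨⟨hsub, hev⟩, hmem⟩ := hF
      refine ⟨⟨?_, ?_⟩, ?_⟩
      · intro x hx
        rw [Finset.mem_symmDiff] at hx
        rcases hx with ⟨h1, -⟩ | ⟨h1, -⟩
        · exact hsub h1
        · exact hCsub h1
      · intro x
        rw [deg_symmDiff_even_iff]
        exact iff_of_true (hev x) (hCev x)
      · intro hc
        rw [Finset.mem_symmDiff] at hc
        tauto
    · intro F hF
      simp only [hX, Finset.mem_filter, Finset.mem_powerset] at hF ⊢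
      obtain ⟨⟨hsub, hev⟩, hmem⟩ := hF
      refine ⟨⟨?_, ?_⟩, ?_⟩
      · intro x hx
        rw [Finset.mem_symmDiff] at hx
        rcases hx with ⟨h1, -⟩ | ⟨h1, -⟩
        · exact hsub h1
        · exact hCsub h1
      · intro x
        rw [deg_symmDiff_even_iff]
        exact iff_of_true (hev x) (hCev x)
      · rw [Finset.mem_symmDiff]
        tauto
    · intro F _
      exact symmDiff_symmDiff_cancel_right C F
    · intro F _
      exact symmDiff_symmDiff_cancel_right C F
  have hfin : numEvenIn (insert s(u,v) ω) = X.card := rfl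
  rw [hfin, ← hsplit, hbij, hX2]
  unfold numEvenIn
  omega

/-- The dimension formula for the cycle space. -/
lemma numEvenIn_mul_pow (ω : Finset (Sym2 V)) (hnd : ∀ e ∈ ω, ¬ e.IsDiag) :
    numEvenIn ω * 2 ^ Fintype.card V = 2 ^ (ω.card + numComp ω) := by
  induction ω using Finset.induction_on with
  | empty =>
    have h1 : numEvenIn (∅ : Finset (Sym2 V)) = 1 := by
      unfold numEvenIn
      rw [Finset.powerset_empty]
      rw [Finset.filter_singleton]
      rw [if_pos]
      · simp
      · intro v; simp
    have h2 : numComp (∅ : Finset (Sym2 V)) = Fintype.card V := by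
      unfold numComp
      have hbot : SimpleGraph.fromEdgeSet (↑(∅ : Finset (Sym2 V)) : Set (Sym2 V)) = ⊥ := by
        rw [Finset.coe_empty, SimpleGraph.fromEdgeSet_empty]
      rw [hbot]
      have hbij : Function.Bijective ((⊥ : SimpleGraph V).connectedComponentMk) := by
        constructor
        · intro x y hxy
          exact SimpleGraph.reachable_bot.mp (SimpleGraph.ConnectedComponent.eq.mp hxy)
        · intro b
          exact SimpleGraph.ConnectedComponent.ind (fun x => ⟨x, rfl⟩) b
      rw [← Nat.card_eq_of_bijective _ hbij, Nat.card_eq_fintype_card]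
    rw [h1, h2, Finset.card_empty, one_mul, zero_add]
  | @insert e ω hemem ih =>
    have hnd' : ∀ e' ∈ ω, ¬ e'.IsDiag := fun e' he' => hnd e' (Finset.mem_insert_of_mem he')
    have ih' := ih hnd'
    have hende : ¬ e.IsDiag := hnd e (Finset.mem_insert_self _ _)
    induction e using Sym2.ind with | _ u v =>
    have huv : u ≠ v := by simpa using hende
    by_cases hreach : (SimpleGraph.fromEdgeSet (↑ω : Set (Sym2 V))).Reachable u v
    · rw [numEvenIn_insert_reachable ω u v huv hemem hreach,
        numComp_insert_reachable ω u v huv hreach,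
        Finset.card_insert_of_notMem hemem]
      have harr : 2 * numEvenIn ω * 2 ^ Fintype.card V
          = 2 * (numEvenIn ω * 2 ^ Fintype.card V) := by ring
      rw [harr, ih', ← pow_succ']
      congr 1
      omega
    · rw [numEvenIn_insert_not_reachable ω u v huv hnd' hreach,
        Finset.card_insert_of_notMem hemem, ih']
      have h3 := numComp_insert_not_reachable ω u v huv hreach
      congr 1
      omega

lemma numEvenIn_pos (ω : Finset (Sym2 V)) : 0 < numEvenIn ω := by
  unfold numEvenIn
  apply Finset.card_pos.mpr
  refine ⟨∅, ?_⟩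
  simp only [Finset.mem_filter, Finset.mem_powerset]
  exact ⟨Finset.empty_subset _, fun v => by simp⟩

/-- `numEvenIn ω` also counts the subsets of `ω` whose odd-degree set is exactly `W`,
provided one such subset `P₀` exists. -/
lemma numEvenIn_eq_card_oddW (W : Finset V) (ω P₀ : Finset (Sym2 V)) (hP₀ : P₀ ⊆ ω)
    (hP₀odd : ∀ v, Odd ((P₀.filter (fun e => v ∈ e)).card) ↔ v ∈ W) :
    numEvenIn ω = (ω.powerset.filter (fun g =>
      ∀ v, Odd ((g.filter (fun e => v ∈ e)).card) ↔ v ∈ W)).card := by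
  unfold numEvenIn
  refine Finset.card_bij' (fun F _ => F ∆ P₀) (fun g _ => g ∆ P₀) ?_ ?_ ?_ ?_
  · intro F hF
    simp only [Finset.mem_filter, Finset.mem_powerset] at hF ⊢
    obtain ⟨hsub, hev⟩ := hF
    constructor
    · intro x hx
      rw [Finset.mem_symmDiff] at hx
      rcases hx with ⟨h1, -⟩ | ⟨h1, -⟩
      · exact hsub h1
      · exact hP₀ h1
    · intro v
      rw [← Nat.not_even_iff_odd, deg_symmDiff_even_iff]
      rw [← hP₀odd v, ← Nat.not_even_iff_odd]
      have hFv := hev v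
      tauto
  · intro g hg
    simp only [Finset.mem_filter, Finset.mem_powerset] at hg ⊢
    obtain ⟨hsub, hodd⟩ := hg
    constructor
    · intro x hx
      rw [Finset.mem_symmDiff] at hx
      rcases hx with ⟨h1, -⟩ | ⟨h1, -⟩
      · exact hsub h1
      · exact hP₀ h1
    · intro v
      rw [deg_symmDiff_even_iff]
      have h1 := hodd v
      have h2 := hP₀odd v
      rw [← Nat.not_even_iff_odd] at h1 h2
      tauto
  · intro F _
    exact symmDiff_symmDiff_cancel_right P₀ F
  · intro g _
    exact symmDiff_symmDiff_cancel_right P₀ g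

end EvenCount

/-- Generalized coupling: with edge parameters `p_e ∈ (0,1)`, `A = {e : p_e > 1/2}`,
`r_e = 2p_e` off `A` and `r_e = 2(1-p_e)` on `A`, and `W` the set of `A`-odd vertices,
sample `ω` from the random-cluster measure with parameters `(r_e)`, `q = 2`, conditioned on
`η(ω)` being `W`-even; take edge-disjoint open paths `P ω` pairing up `W` (characterized by
`P ω ⊆ ω` having odd degree exactly at the vertices of `W`); and sample a uniform even
subgraph `γ` of `(V, η(ω))`.  Then `F = γ Δ P_ω Δ A` has the law
`ρ_𝐩(F) ∝ ∏_{e∈F} p_e ∏_{e∉F} (1-p_e)` on even sets. -/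
theorem generalized_coupling {V : Type} [Fintype V] [DecidableEq V]
    (G : SimpleGraph V) [DecidableRel G.Adj] (p : Sym2 V → ℝ)
    (hp : ∀ e ∈ G.edgeFinset, 0 < p e ∧ p e < 1)
    (A : Finset (Sym2 V)) (hA : A = G.edgeFinset.filter (fun e => 1 / 2 < p e))
    (r : Sym2 V → ℝ) (hr : ∀ e, r e = if 1 / 2 < p e then 2 * (1 - p e) else 2 * p e)
    (W : Finset V) (hW : W = Finset.univ.filter (fun v => Odd ((A.filter (fun e => v ∈ e)).card)))
    (P : Finset (Sym2 V) → Finset (Sym2 V))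
    (hP : ∀ ω ⊆ G.edgeFinset, WEven W ω → P ω ⊆ ω ∧
      ∀ v : V, Odd (((P ω).filter (fun e => v ∈ e)).card) ↔ v ∈ W)
    (f : Finset (Sym2 V)) (hf : f ⊆ G.edgeFinset) (hfe : EvenSet f) :
    (∑ ω ∈ G.edgeFinset.powerset.filter (fun ω => WEven W ω),
        (2 ^ numComp ω * ∏ e ∈ G.edgeFinset, (if e ∈ ω then r e else 1 - r e)) *
          (if symmDiff (symmDiff f A) (P ω) ⊆ ω ∧ EvenSet (symmDiff (symmDiff f A) (P ω))
            then ((numEvenIn ω : ℝ))⁻¹ else 0)) /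
      (∑ ω ∈ G.edgeFinset.powerset.filter (fun ω => WEven W ω),
        ((2 : ℝ) ^ numComp ω * ∏ e ∈ G.edgeFinset, (if e ∈ ω then r e else 1 - r e))) =
    (∏ e ∈ G.edgeFinset, (if e ∈ f then p e else 1 - p e)) /
      (∑ f' ∈ G.edgeFinset.powerset.filter (fun f' => EvenSet f'),
        ∏ e ∈ G.edgeFinset, (if e ∈ f' then p e else 1 - p e)) := by
  classical
  have hEnd : ∀ e ∈ G.edgeFinset, ¬ e.IsDiag := by
    intro e he
    exact SimpleGraph.not_isDiag_of_mem_edgeSet G (SimpleGraph.mem_edgeFinset.mp he)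
  set E := G.edgeFinset with hE
  set n := Fintype.card V with hn
  set q : Sym2 V → ℝ := fun e => if 1 / 2 < p e then 1 - p e else p e with hq
  have hqr : ∀ e, r e = 2 * q e := by
    intro e
    rw [hr e]
    show _ = 2 * (if 1 / 2 < p e then 1 - p e else p e)
    split_ifs <;> ring
  have hAsub : A ⊆ E := by rw [hA]; exact Finset.filter_subset _ _
  have hAmem : ∀ e, e ∈ A ↔ (e ∈ E ∧ 1 / 2 < p e) := by
    intro e; rw [hA]; simp [hE]
  have hWmem : ∀ v, v ∈ W ↔ Odd ((A.filter (fun e => v ∈ e)).card) := by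
    intro v; rw [hW]; simp
  -- parity correspondence between odd-W sets and even sets, via ∆ A
  have hparity : ∀ g : Finset (Sym2 V),
      (∀ v, Odd ((g.filter (fun e => v ∈ e)).card) ↔ v ∈ W) ↔ EvenSet (g ∆ A) := by
    intro g
    constructor
    · intro hg v
      rw [deg_symmDiff_even_iff]
      have h1 := hg v
      have h2 := hWmem v
      rw [← Nat.not_even_iff_odd] at h1 h2
      tauto
    · intro hg v
      have h1 := hg v
      rw [deg_symmDiff_even_iff] at h1
      have h2 := hWmem v
      rw [← Nat.not_even_iff_odd] at h2
      rw [← Nat.not_even_iff_odd]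
      tauto
  -- pointwise weight correspondence
  have hpoint : ∀ (g : Finset (Sym2 V)), ∀ e ∈ E,
      (if e ∈ g ∆ A then p e else 1 - p e) = (if e ∈ g then q e else 1 - q e) := by
    intro g e heE
    have hqe : q e = if 1 / 2 < p e then 1 - p e else p e := rfl
    by_cases hA2 : e ∈ A
    · have hp2 : 1 / 2 < p e := ((hAmem e).mp hA2).2
      rw [hqe, if_pos hp2]
      by_cases hg2 : e ∈ g
      · rw [if_neg (by rw [Finset.mem_symmDiff]; tauto), if_pos hg2]
      · rw [if_pos (by rw [Finset.mem_symmDiff]; tauto), if_neg hg2]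
        ring
    · have hp2 : ¬ 1 / 2 < p e := fun hc => hA2 ((hAmem e).mpr ⟨heE, hc⟩)
      rw [hqe, if_neg hp2]
      by_cases hg2 : e ∈ g
      · rw [if_pos (by rw [Finset.mem_symmDiff]; tauto), if_pos hg2]
      · rw [if_neg (by rw [Finset.mem_symmDiff]; tauto), if_neg hg2]
  set Q : Finset (Sym2 V) → ℝ :=
    fun ω => ∏ e ∈ E, (if e ∈ ω then q e else 1 - 2 * q e) with hQ
  have hrprod : ∀ ω, ω ⊆ E →
      ∏ e ∈ E, (if e ∈ ω then r e else 1 - r e) = 2 ^ ω.card * Q ω := by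
    intro ω hω
    have h1 : ∀ e ∈ E, (if e ∈ ω then r e else 1 - r e)
        = (if e ∈ ω then 2 * q e else 1 - 2 * q e) := by
      intro e _
      rw [hqr e]
    rw [Finset.prod_congr rfl h1, prod_ite_mem_split E ω hω]
    have h2 : Q ω = (∏ e ∈ ω, q e) * ∏ e ∈ E \ ω, (1 - 2 * q e) :=
      prod_ite_mem_split E ω hω q (fun e => 1 - 2 * q e)
    rw [h2, Finset.prod_mul_distrib, Finset.prod_const]
    ring
  have hNk : ∀ ω, ω ⊆ E →
      ((numEvenIn ω : ℝ)) * 2 ^ n = 2 ^ ω.card * 2 ^ numComp ω := by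
    intro ω hω
    have h0 := numEvenIn_mul_pow ω (fun e he => hEnd e (hω he))
    have hcast := congrArg (fun m : ℕ => (m : ℝ)) h0
    push_cast at hcast
    rw [pow_add] at hcast
    exact hcast
  have hNne : ∀ ω : Finset (Sym2 V), ((numEvenIn ω : ℝ)) ≠ 0 := by
    intro ω
    exact_mod_cast (numEvenIn_pos ω).ne'
  set g₀ : Finset (Sym2 V) := f ∆ A with hg₀
  have hg₀E : g₀ ⊆ E := by
    intro e he
    rw [hg₀, Finset.mem_symmDiff] at he
    rcases he with ⟨h1, -⟩ | ⟨h1, -⟩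
    · exact hf h1
    · exact hAsub h1
  have hg₀cancel : g₀ ∆ A = f := by
    rw [hg₀]
    exact symmDiff_symmDiff_cancel_right A f
  have hg₀odd : ∀ v, Odd ((g₀.filter (fun e => v ∈ e)).card) ↔ v ∈ W := by
    refine (hparity g₀).mpr ?_
    rw [hg₀cancel]
    exact hfe
  -- key: sets containing an odd-W set are automatically W-even
  have hSg : ∀ g : Finset (Sym2 V),
      (∀ v, Odd ((g.filter (fun e => v ∈ e)).card) ↔ v ∈ W) →
      (E.powerset.filter (fun ω => WEven W ω)).filter (fun ω => g ⊆ ω)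
        = E.powerset.filter (fun ω => g ⊆ ω) := by
    intro g hgodd
    ext ω
    simp only [Finset.mem_filter, Finset.mem_powerset]
    constructor
    · tauto
    · rintro ⟨h1, h2⟩
      exact ⟨⟨h1, wEven_of_subset_odd W ω g h2
        (fun e he => hEnd e (h1 (h2 he))) hgodd⟩, h2⟩
  -- Numerator
  have hnum : (∑ ω ∈ E.powerset.filter (fun ω => WEven W ω),
        (2 ^ numComp ω * ∏ e ∈ E, (if e ∈ ω then r e else 1 - r e)) *
          (if symmDiff (symmDiff f A) (P ω) ⊆ ω ∧ EvenSet (symmDiff (symmDiff f A) (P ω))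
            then ((numEvenIn ω : ℝ))⁻¹ else 0))
      = 2 ^ n * ∏ e ∈ E, (if e ∈ f then p e else 1 - p e) := by
    have hterm : ∀ ω ∈ E.powerset.filter (fun ω => WEven W ω),
        (2 ^ numComp ω * ∏ e ∈ E, (if e ∈ ω then r e else 1 - r e)) *
          (if symmDiff (symmDiff f A) (P ω) ⊆ ω ∧ EvenSet (symmDiff (symmDiff f A) (P ω))
            then ((numEvenIn ω : ℝ))⁻¹ else 0)
          = if g₀ ⊆ ω then 2 ^ n * Q ω else 0 := by
      intro ω hω
      rw [Finset.mem_filter, Finset.mem_powerset] at hω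
      obtain ⟨hωE, hωW⟩ := hω
      obtain ⟨hPsub, hPodd⟩ := hP ω hωE hωW
      have hsd : symmDiff (symmDiff f A) (P ω) = g₀ ∆ P ω := rfl
      have hEvS : EvenSet (g₀ ∆ P ω) := by
        intro v
        rw [deg_symmDiff_even_iff]
        have h1 := hg₀odd v
        have h2 := hPodd v
        rw [← Nat.not_even_iff_odd] at h1 h2
        tauto
      have hsubiff : (g₀ ∆ P ω ⊆ ω) ↔ g₀ ⊆ ω := by
        constructor
        · intro hs e heg
          by_cases hp2 : e ∈ P ω
          · exact hPsub hp2
          · exact hs (Finset.mem_symmDiff.mpr (Or.inl ⟨heg, hp2⟩))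
        · intro hs e he
          rw [Finset.mem_symmDiff] at he
          rcases he with ⟨h1, -⟩ | ⟨h1, -⟩
          · exact hs h1
          · exact hPsub h1
      rw [hsd]
      by_cases hg : g₀ ⊆ ω
      · rw [if_pos hg, if_pos ⟨hsubiff.mpr hg, hEvS⟩, hrprod ω hωE]
        have hNk' := hNk ω hωE
        have harr : (2:ℝ) ^ numComp ω * (2 ^ ω.card * Q ω)
            = (numEvenIn ω : ℝ) * (2 ^ n * Q ω) := by
          linear_combination (- Q ω) * hNk'
        rw [harr, mul_comm ((numEvenIn ω : ℝ)) (2 ^ n * Q ω)]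
        exact mul_inv_cancel_right₀ (hNne ω) _
      · rw [if_neg hg, if_neg, mul_zero]
        rintro ⟨hc, -⟩
        exact hg (hsubiff.mp hc)
    rw [Finset.sum_congr rfl hterm, ← Finset.sum_filter, hSg g₀ hg₀odd]
    rw [← Finset.mul_sum]
    congr 1
    rw [sum_filter_superset E g₀ hg₀E q (fun e => 1 - 2 * q e)]
    have hb : ∏ e ∈ E \ g₀, (q e + (1 - 2 * q e)) = ∏ e ∈ E \ g₀, (1 - q e) :=
      Finset.prod_congr rfl (fun e _ => by ring)
    rw [hb, ← prod_ite_mem_split E g₀ hg₀E q (fun e => 1 - q e)]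
    refine Finset.prod_congr rfl (fun e he => ?_)
    rw [← hpoint g₀ e he, hg₀cancel]
  -- Denominator
  set T : Finset (Finset (Sym2 V)) := E.powerset.filter
    (fun g => ∀ v, Odd ((g.filter (fun e => v ∈ e)).card) ↔ v ∈ W) with hT
  have hden : (∑ ω ∈ E.powerset.filter (fun ω => WEven W ω),
        ((2 : ℝ) ^ numComp ω * ∏ e ∈ E, (if e ∈ ω then r e else 1 - r e)))
      = 2 ^ n * (∑ f' ∈ E.powerset.filter (fun f' => EvenSet f'),
          ∏ e ∈ E, (if e ∈ f' then p e else 1 - p e)) := by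
    have hterm : ∀ ω ∈ E.powerset.filter (fun ω => WEven W ω),
        ((2 : ℝ) ^ numComp ω * ∏ e ∈ E, (if e ∈ ω then r e else 1 - r e))
          = ∑ g ∈ T, (if g ⊆ ω then 2 ^ n * Q ω else 0) := by
      intro ω hω
      rw [Finset.mem_filter, Finset.mem_powerset] at hω
      obtain ⟨hωE, hωW⟩ := hω
      obtain ⟨hPsub, hPodd⟩ := hP ω hωE hωW
      rw [hrprod ω hωE]
      have hNk' := hNk ω hωE
      have harr : (2:ℝ) ^ numComp ω * (2 ^ ω.card * Q ω)
          = (numEvenIn ω : ℝ) * (2 ^ n * Q ω) := by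
        linear_combination (- Q ω) * hNk'
      rw [harr]
      have hcard := numEvenIn_eq_card_oddW W ω (P ω) hPsub hPodd
      have hsetid : ω.powerset.filter
          (fun g => ∀ v, Odd ((g.filter (fun e => v ∈ e)).card) ↔ v ∈ W)
          = T.filter (fun g => g ⊆ ω) := by
        ext g
        simp only [hT, Finset.mem_filter, Finset.mem_powerset]
        constructor
        · rintro ⟨h1, h2⟩
          exact ⟨⟨h1.trans hωE, h2⟩, h1⟩
        · rintro ⟨⟨h1, h2⟩, h3⟩
          exact ⟨h3, h2⟩
      rw [hcard, hsetid]
      rw [← Finset.sum_filter]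
      rw [Finset.sum_const, nsmul_eq_mul]
    rw [Finset.sum_congr rfl hterm, Finset.sum_comm]
    have hinner : ∀ g ∈ T,
        (∑ ω ∈ E.powerset.filter (fun ω => WEven W ω), if g ⊆ ω then 2 ^ n * Q ω else 0)
          = 2 ^ n * ∏ e ∈ E, (if e ∈ g ∆ A then p e else 1 - p e) := by
      intro g hg
      rw [hT, Finset.mem_filter, Finset.mem_powerset] at hg
      obtain ⟨hgE, hgodd⟩ := hg
      rw [← Finset.sum_filter, hSg g hgodd, ← Finset.mul_sum]
      congr 1
      rw [sum_filter_superset E g hgE q (fun e => 1 - 2 * q e)]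
      have hb : ∏ e ∈ E \ g, (q e + (1 - 2 * q e)) = ∏ e ∈ E \ g, (1 - q e) :=
        Finset.prod_congr rfl (fun e _ => by ring)
      rw [hb, ← prod_ite_mem_split E g hgE q (fun e => 1 - q e)]
      exact (Finset.prod_congr rfl (fun e he => hpoint g e he)).symm
    rw [Finset.sum_congr rfl hinner, ← Finset.mul_sum]
    congr 1
    refine Finset.sum_nbij' (fun g => g ∆ A) (fun f' => f' ∆ A) ?_ ?_ ?_ ?_ ?_
    · intro g hg
      rw [hT, Finset.mem_filter, Finset.mem_powerset] at hg
      obtain ⟨h1, h2⟩ := hg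
      rw [Finset.mem_filter, Finset.mem_powerset]
      constructor
      · intro e he
        rw [Finset.mem_symmDiff] at he
        rcases he with ⟨h3, -⟩ | ⟨h3, -⟩
        · exact h1 h3
        · exact hAsub h3
      · exact (hparity g).mp h2
    · intro f' hf'
      rw [Finset.mem_filter, Finset.mem_powerset] at hf'
      obtain ⟨h1, h2⟩ := hf'
      rw [hT, Finset.mem_filter, Finset.mem_powerset]
      constructor
      · intro e he
        rw [Finset.mem_symmDiff] at he
        rcases he with ⟨h3, -⟩ | ⟨h3, -⟩
        · exact h1 h3
        · exact hAsub h3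
      · refine (hparity (f' ∆ A)).mpr ?_
        rw [symmDiff_symmDiff_cancel_right]
        exact h2
    · intro g _
      exact symmDiff_symmDiff_cancel_right A g
    · intro f' _
      exact symmDiff_symmDiff_cancel_right A f'
    · intro g _
      rfl
  rw [hnum, hden]
  rw [mul_div_mul_left _ _ (by positivity : (2:ℝ) ^ n ≠ 0)]
end

section
/- In an infinite locally finite graph, every edge e of an even subgraph F lies in a finite cycle contained in F or in a doubly infinite path (infinite cycle) contained in F. -/
open Finset

section Aux
open SimpleGraph
variable {V : Type}

lemma aux_getVert_inj {G : SimpleGraph V} {u v : V} (p : G.Walk u v) (hp : p.IsPath) :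
    ∀ i j, i ≤ p.length → j ≤ p.length → p.getVert i = p.getVert j → i = j := by
  induction p with
  | nil => intro i j hi hj _; simp at hi hj; omega
  | @cons u x w h q ih =>
    intro i j hi hj hij
    rw [SimpleGraph.Walk.cons_isPath_iff] at hp
    match i, j with
    | 0, 0 => rfl
    | 0, (k+1) =>
      exfalso
      rw [Walk.getVert_zero, Walk.getVert_cons_succ] at hij
      have hk : k ≤ q.length := by simp [Walk.length_cons] at hj; omega
      have hm : q.getVert k ∈ q.support := Walk.mem_support_iff_exists_getVert.mpr ⟨k, rfl, hk⟩
      rw [← hij] at hm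
      exact hp.2 hm
    | (k+1), 0 =>
      exfalso
      rw [Walk.getVert_zero, Walk.getVert_cons_succ] at hij
      have hk : k ≤ q.length := by simp [Walk.length_cons] at hi; omega
      have hm : q.getVert k ∈ q.support := Walk.mem_support_iff_exists_getVert.mpr ⟨k, rfl, hk⟩
      rw [hij] at hm
      exact hp.2 hm
    | (k+1), (l+1) =>
      rw [Walk.getVert_cons_succ, Walk.getVert_cons_succ] at hij
      have := ih hp.1 k l (by simp [Walk.length_cons] at hi; omega)
        (by simp [Walk.length_cons] at hj; omega) hij
      omega

lemma aux_exists_ray (H : SimpleGraph V) (hfin : ∀ v : V, (H.neighborSet v).Finite) (x : V)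
    (hinf : {v | H.Reachable x v}.Infinite) :
    ∃ f : ℕ → V, f 0 = x ∧ Function.Injective f ∧ (∀ n, H.Adj (f n) (f (n + 1))) := by
  classical
  have hP : ∀ v : V, H.Reachable x v → ∃ p : H.Walk x v, p.IsPath := by
    intro v h
    obtain ⟨w⟩ := h
    exact ⟨w.toPath.1, w.toPath.2⟩
  let P : ∀ v : V, H.Reachable x v → H.Walk x v := fun v h => (hP v h).choose
  have hPpath : ∀ v h, (P v h).IsPath := fun v h => (hP v h).choose_spec
  let Inv : ℕ → V → Set V → Prop := fun n w A =>
    A.Infinite ∧ ∀ v ∈ A, ∃ h : H.Reachable x v, n ≤ (P v h).length ∧ (P v h).getVert n = w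
  have hInv0 : Inv 0 x {v | H.Reachable x v} :=
    ⟨hinf, fun v hv => ⟨hv, Nat.zero_le _, Walk.getVert_zero _⟩⟩
  have hstep : ∀ n w A, Inv n w A →
      ∃ w' A', Inv (n+1) w' A' ∧ A' ⊆ A ∧ H.Adj w w' := by
    rintro n w A ⟨hA, hmem⟩
    set A' : Set V := {v ∈ A | ∃ h : H.Reachable x v, n < (P v h).length} with hA'def
    have hA' : A'.Infinite := by
      apply (hA.diff (Set.finite_singleton w)).mono
      rintro v ⟨hv, hvw⟩
      obtain ⟨h, hlen, hget⟩ := hmem v hv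
      refine ⟨hv, h, lt_of_le_of_ne hlen fun hne => hvw ?_⟩
      rw [Set.mem_singleton_iff, ← hget, hne, Walk.getVert_length]
    -- pigeonhole over neighbors of w
    have hcover : A' ⊆ ⋃ u ∈ H.neighborSet w, {v ∈ A' | ∃ h : H.Reachable x v,
        (P v h).getVert (n+1) = u} := by
      rintro v ⟨hv, h, hlen⟩
      obtain ⟨h', hlen', hget'⟩ := hmem v hv
      have hadj : H.Adj w ((P v h).getVert (n+1)) := by
        have := (P v h).adj_getVert_succ hlen
        rwa [show (P v h).getVert n = w from hget'] at this
      exact Set.mem_biUnion hadj ⟨⟨hv, h, hlen⟩, h, rfl⟩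
    have : ∃ u ∈ H.neighborSet w, {v ∈ A' | ∃ h : H.Reachable x v,
        (P v h).getVert (n+1) = u}.Infinite := by
      by_contra hcon
      push_neg at hcon
      exact hA' (((hfin w).biUnion hcon).subset hcover)
    obtain ⟨u, hu, hufib⟩ := this
    refine ⟨u, _, ⟨hufib, ?_⟩, fun v hv => hv.1.1, hu⟩
    rintro v ⟨⟨hvA, h, hlen⟩, h', hget⟩
    exact ⟨h', by omega, hget⟩
  choose W B hI hS hAdj using hstep
  let seq : ∀ n : ℕ, {p : V × Set V // Inv n p.1 p.2} := fun n =>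
    Nat.rec ⟨(x, {v | H.Reachable x v}), hInv0⟩
      (fun n s => ⟨(W n s.1.1 s.1.2 s.2, B n s.1.1 s.1.2 s.2), hI n s.1.1 s.1.2 s.2⟩) n
  let f : ℕ → V := fun n => (seq n).1.1
  have hf0 : f 0 = x := rfl
  have hadj : ∀ n, H.Adj (f n) (f (n+1)) := fun n => hAdj n _ _ (seq n).2
  have hsub : ∀ n, (seq (n+1)).1.2 ⊆ (seq n).1.2 := fun n => hS n _ _ (seq n).2
  have hmono : ∀ m n, m ≤ n → (seq n).1.2 ⊆ (seq m).1.2 := by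
    intro m n hmn
    induction n with
    | zero =>
      have : m = 0 := by omega
      subst this; exact fun v hv => hv
    | succ n ih =>
      rcases Nat.lt_or_ge m (n+1) with h | h
      · exact fun v hv => ih (by omega) (hsub n hv)
      · have : m = n + 1 := by omega
        subst this; exact fun v hv => hv
  have key : ∀ m n, m < n → f m ≠ f n := by
    intro m n hmn heq
    obtain ⟨v, hv⟩ := (seq n).2.1.nonempty
    have hvm : v ∈ (seq m).1.2 := hmono m n (by omega) hv
    obtain ⟨h, hlen, hget⟩ := (seq n).2.2 v hv
    obtain ⟨h', hlen', hget'⟩ := (seq m).2.2 v hvm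
    have hpe : h' = h := rfl
    subst hpe
    have := aux_getVert_inj (P v h') (hPpath v h') m n (by omega) hlen
      (by rw [hget, hget']; exact heq)
    omega
  refine ⟨f, hf0, ?_, hadj⟩
  intro m n heq
  rcases lt_trichotomy m n with h | h | h
  · exact absurd heq (key m n h)
  · exact h
  · exact absurd heq.symm (key n m h)

lemma aux_comp_infinite (H : SimpleGraph V) (x : V)
    (hodd : Odd (Nat.card (H.neighborSet x)))
    (heven : ∀ v, H.Reachable x v → v ≠ x → Even (Nat.card (H.neighborSet v))) :
    {v | H.Reachable x v}.Infinite := by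
  classical
  by_contra hC
  rw [Set.not_infinite] at hC
  set C : Set V := {v | H.Reachable x v} with hCdef
  have hxC : x ∈ C := Reachable.refl x
  have hadjC : ∀ {v w : V}, v ∈ C → H.Adj v w → w ∈ C :=
    fun hv h => hv.trans h.reachable
  haveI : Fintype C := hC.fintype
  let K : SimpleGraph C := H.induce C
  haveI : DecidableRel K.Adj := Classical.decRel _
  -- degree in K equals Nat.card of neighborSet in H
  have hdeg : ∀ v : C, (K.degree v : ℕ) = Nat.card (H.neighborSet v.1) := by
    intro v
    rw [← card_neighborSet_eq_degree, ← Nat.card_eq_fintype_card]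
    apply Nat.card_congr
    exact {
      toFun := fun w => ⟨w.1.1, w.2⟩
      invFun := fun w => ⟨⟨w.1, hadjC v.2 w.2⟩, w.2⟩
      left_inv := fun w => by ext; rfl
      right_inv := fun w => rfl }
  have heq : Finset.filter (fun v : C => Odd (K.degree v)) Finset.univ = {⟨x, hxC⟩} := by
    ext v
    simp only [Finset.mem_filter, Finset.mem_univ, true_and, Finset.mem_singleton]
    rw [hdeg]
    constructor
    · intro hv
      by_contra hne
      have : v.1 ≠ x := fun h => hne (Subtype.ext h)
      exact (Nat.not_odd_iff_even.mpr (heven v.1 v.2 this)) hv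
    · rintro rfl
      exact hodd
  have := K.even_card_odd_degree_vertices
  rw [heq] at this
  simp at this

end Aux

open SimpleGraph in
/-- In an infinite, locally finite graph, every edge of an even subgraph `F` lies in a
finite cycle contained in `F` or in a doubly infinite path (infinite cycle)
contained in `F`. -/
theorem even_edge_in_cycle_or_doubly_infinite_path {V : Type} [Infinite V]
    (G : SimpleGraph V) [G.LocallyFinite] (F : Set (Sym2 V)) (hFE : F ⊆ G.edgeSet)
    (hFeven : ∀ v : V, Even (Nat.card {e : Sym2 V // e ∈ F ∧ v ∈ e}))
    (e : Sym2 V) (he : e ∈ F) :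
    (∃ (v : V) (w : G.Walk v v), w.IsCycle ∧ e ∈ w.edges ∧ ∀ e' ∈ w.edges, e' ∈ F) ∨
    (∃ φ : ℤ → V, Function.Injective φ ∧ (∀ i : ℤ, s(φ i, φ (i + 1)) ∈ F) ∧
      ∃ i : ℤ, e = s(φ i, φ (i + 1))) := by
  classical
  -- the graph with edge set F
  let H : SimpleGraph V :=
    { Adj := fun v w => s(v, w) ∈ F
      symm := ⟨fun v w h => by change s(w, v) ∈ F; rwa [Sym2.eq_swap]⟩
      loopless := ⟨fun v h => G.irrefl (G.mem_edgeSet.mp (hFE h))⟩ }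
  have hHG : H ≤ G := fun {v w} h => G.mem_edgeSet.mp (hFE h)
  have hHF : ∀ {v w : V}, H.Adj v w → s(v, w) ∈ F := fun h => h
  have hfinH : ∀ v : V, (H.neighborSet v).Finite := fun v =>
    Set.Finite.subset (G.neighborSet v).toFinite (fun w hw => hHG hw)
  -- degrees of H are even
  have hHdeg : ∀ v : V, Even (Nat.card (H.neighborSet v)) := by
    intro v
    have : Nat.card (H.neighborSet v) = Nat.card {e : Sym2 V // e ∈ F ∧ v ∈ e} := by
      apply Nat.card_congr
      refine Equiv.ofBijective (fun w => ⟨s(v, w.1), w.2, Sym2.mem_mk_left _ _⟩) ⟨?_, ?_⟩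
      · rintro ⟨w, hw⟩ ⟨w', hw'⟩ h
        simp only [Subtype.mk.injEq] at h ⊢
        exact Sym2.congr_right.mp h
      · rintro ⟨e', he', hve'⟩
        obtain ⟨w, rfl⟩ := Sym2.mem_iff_exists.mp hve'
        exact ⟨⟨w, he'⟩, rfl⟩
    rw [this]; exact hFeven v
  induction e with
  | _ a b =>
  have hab : H.Adj a b := he
  have hne : a ≠ b := H.ne_of_adj hab
  set H' : SimpleGraph V := H.deleteEdges {s(a, b)} with hH'def
  have hH'H : H' ≤ H := deleteEdges_le _
  have hfinH' : ∀ v : V, (H'.neighborSet v).Finite := fun v =>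
    Set.Finite.subset (hfinH v) (fun w hw => hH'H hw)
  by_cases hr : H'.Reachable b a
  · -- finite cycle
    left
    obtain ⟨q, hq⟩ : ∃ q : H'.Walk b a, q.IsPath := by
      obtain ⟨w⟩ := hr
      exact ⟨w.toPath.1, w.toPath.2⟩
    have hqe : ∀ e' ∈ q.edges, e' ∈ H.edgeSet :=
      fun e' h => edgeSet_mono hH'H (q.edges_subset_edgeSet h)
    let q' : H.Walk b a := q.transfer H hqe
    have hq' : q'.IsPath := hq.transfer hqe
    have hnotin : s(a, b) ∉ q'.edges := by
      rw [Walk.edges_transfer]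
      intro hmem
      have := q.edges_subset_edgeSet hmem
      rw [edgeSet_deleteEdges] at this
      exact this.2 rfl
    have hcyc : (Walk.cons hab q').IsCycle :=
      (Walk.cons_isCycle_iff q' hab).mpr ⟨hq', hnotin⟩
    have hce : ∀ e' ∈ (Walk.cons hab q').edges, e' ∈ G.edgeSet := by
      intro e' h
      exact edgeSet_mono hHG ((Walk.cons hab q').edges_subset_edgeSet h)
    refine ⟨a, (Walk.cons hab q').transfer G hce, hcyc.transfer hce, ?_, ?_⟩
    · rw [Walk.edges_transfer, Walk.edges_cons]
      exact List.mem_cons_self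
    · intro e' h
      rw [Walk.edges_transfer] at h
      have := (Walk.cons hab q').edges_subset_edgeSet h
      revert this
      induction e' with
      | _ u w => exact fun h' => hHF (H.mem_edgeSet.mp h')
  · -- doubly infinite path
    right
    -- neighbor sets in H'
    have hnbA : H'.neighborSet a = H.neighborSet a \ {b} := by
      ext w
      simp only [mem_neighborSet, Set.mem_diff, Set.mem_singleton_iff, hH'def,
        deleteEdges_adj, Set.mem_singleton_iff]
      constructor
      · rintro ⟨h1, h2⟩
        exact ⟨h1, fun hwb => h2 (by rw [hwb])⟩
      · rintro ⟨h1, h2⟩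
        exact ⟨h1, fun hs => h2 (Sym2.congr_right.mp hs)⟩
    have hnbB : H'.neighborSet b = H.neighborSet b \ {a} := by
      ext w
      simp only [mem_neighborSet, Set.mem_diff, Set.mem_singleton_iff, hH'def,
        deleteEdges_adj, Set.mem_singleton_iff]
      constructor
      · rintro ⟨h1, h2⟩
        refine ⟨h1, fun hwa => h2 ?_⟩
        rw [hwa]; exact Sym2.eq_swap
      · rintro ⟨h1, h2⟩
        exact ⟨h1, fun hs => h2 (Sym2.congr_right.mp (hs.trans Sym2.eq_swap))⟩
    have hnbO : ∀ v : V, v ≠ a → v ≠ b → H'.neighborSet v = H.neighborSet v := by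
      intro v hva hvb
      ext w
      simp only [mem_neighborSet, hH'def, deleteEdges_adj, Set.mem_singleton_iff]
      refine ⟨fun h => h.1, fun h => ⟨h, fun hs => ?_⟩⟩
      have : v ∈ s(a, b) := hs ▸ Sym2.mem_mk_left v w
      rw [Sym2.mem_iff] at this
      tauto
    -- odd degrees at a and b in H'
    have hoddA : Odd (Nat.card (H'.neighborSet a)) := by
      have hmem : b ∈ H.neighborSet a := hab
      rw [hnbA, Nat.card_coe_set_eq, Set.ncard_diff_singleton_of_mem hmem]
      refine Nat.Even.sub_odd ((Set.ncard_pos (hfinH a)).mpr ⟨b, hmem⟩) ?_ odd_one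
      rw [← Nat.card_coe_set_eq]; exact hHdeg a
    have hoddB : Odd (Nat.card (H'.neighborSet b)) := by
      have hmem : a ∈ H.neighborSet b := hab.symm
      rw [hnbB, Nat.card_coe_set_eq, Set.ncard_diff_singleton_of_mem hmem]
      refine Nat.Even.sub_odd ((Set.ncard_pos (hfinH b)).mpr ⟨a, hmem⟩) ?_ odd_one
      rw [← Nat.card_coe_set_eq]; exact hHdeg b
    have hinfA : {v | H'.Reachable a v}.Infinite := by
      apply aux_comp_infinite H' a hoddA
      intro v hv hva
      by_cases hvb : v = b
      · exact absurd (hvb ▸ hv).symm hr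
      · rw [hnbO v hva hvb]; exact hHdeg v
    have hinfB : {v | H'.Reachable b v}.Infinite := by
      apply aux_comp_infinite H' b hoddB
      intro v hv hvb
      by_cases hva : v = a
      · exact absurd (hva ▸ hv) hr
      · rw [hnbO v hva hvb]; exact hHdeg v
    obtain ⟨f, hf0, hfinj, hfadj⟩ := aux_exists_ray H' hfinH' a hinfA
    obtain ⟨g, hg0, hginj, hgadj⟩ := aux_exists_ray H' hfinH' b hinfB
    have hfreach : ∀ n, H'.Reachable a (f n) := by
      intro n; induction n with
      | zero => rw [hf0]
      | succ n ih => exact ih.trans (hfadj n).reachable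
    have hgreach : ∀ n, H'.Reachable b (g n) := by
      intro n; induction n with
      | zero => rw [hg0]
      | succ n ih => exact ih.trans (hgadj n).reachable
    have hdisj : ∀ m k, f m ≠ g k := by
      intro m k heq
      exact hr ((hgreach k).trans (heq ▸ (hfreach m)).symm)
    set φ : ℤ → V := fun i => if 0 ≤ i then f i.toNat else g (-(i+1)).toNat with hφ
    have hφpos : ∀ i : ℤ, 0 ≤ i → φ i = f i.toNat := fun i hi => if_pos hi
    have hφneg : ∀ i : ℤ, ¬ 0 ≤ i → φ i = g (-(i+1)).toNat := fun i hi => if_neg hi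
    refine ⟨φ, ?_, ?_, ?_⟩
    · intro i j hij
      by_cases hi : 0 ≤ i <;> by_cases hj : 0 ≤ j
      · rw [hφpos i hi, hφpos j hj] at hij
        have := hfinj hij; omega
      · rw [hφpos i hi, hφneg j hj] at hij
        exact absurd hij (hdisj _ _)
      · rw [hφneg i hi, hφpos j hj] at hij
        exact absurd hij.symm (hdisj _ _)
      · rw [hφneg i hi, hφneg j hj] at hij
        have := hginj hij; omega
    · intro i
      rcases lt_trichotomy i (-1) with hi | hi | hi
      · rw [hφneg i (by omega), hφneg (i+1) (by omega),
          show (-(i+1)).toNat = (-(i+1+1)).toNat + 1 from by omega, Sym2.eq_swap]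
        exact hHF (hH'H (hgadj _))
      · subst hi
        rw [hφneg (-1) (by omega), hφpos (-1+1) (by omega)]
        norm_num
        rw [hg0, hf0, Sym2.eq_swap]
        exact he
      · rw [hφpos i (by omega), hφpos (i+1) (by omega),
          show (i+1).toNat = i.toNat + 1 from by omega]
        exact hHF (hH'H (hfadj _))
    · refine ⟨-1, ?_⟩
      rw [hφneg (-1) (by omega), hφpos (-1+1) (by omega),
        show ((-(-1+1) : ℤ)).toNat = 0 from by norm_num,
        show ((-1+1 : ℤ)).toNat = 0 from by norm_num, hg0, hf0]
      exact Sym2.eq_swap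
end
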